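/- arXiv:1609.03060 — 6 statements merged into one kernel-verified Lean document; each statement's English description precedes it below -/
import Mathlib

section
/- Assume condition (C) holds and n/√(m_n) → 0 as n → ∞ (with m_n → ∞). Then (χ²_n − m_n)/√(2 m_n) converges to 0 in probability. -/
open MeasureTheory ProbabilityTheory Filter
open scoped BoundedContinuousFunction

noncomputable def empFreq {Ω : Type*} (X : ℕ → ℕ → Ω → ℕ) (n i : ℕ) (ω : Ω) : ℝ :=
  (n : ℝ)⁻¹ * ∑ k ∈ Finset.Icc 1 n, (if X n k ω = i then (1 : ℝ) else 0)

/-- The Pearson chi-square statistic. -/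
noncomputable def chiSq {Ω : Type*} (m : ℕ → ℕ) (p : ℕ → ℕ → ℝ) (X : ℕ → ℕ → Ω → ℕ)
    (n : ℕ) (ω : Ω) : ℝ :=
  (n : ℝ) * ∑ i ∈ Finset.Icc 1 (m n), (empFreq X n i ω - p n i) ^ 2 / p n i

/-!
Expanding the square gives `χ²_n = D_n + O_n - n` with `D_n = n⁻¹ ∑_k 1 / p(X_k)` and
`O_n = n⁻¹ ∑_{k ≠ l} 1{X_k = X_l} / p(X_k) ≥ 0`. The average `D_n` of i.i.d. terms has mean `m_n`
and variance `Var(1 / p(X_n)) / n`, so Chebyshev bounds `P(|D_n - m_n| ≥ ε √(2 m_n) / 2)` by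
`2 Var(1 / p(X_n)) / (ε² m_n n)`, which tends to zero by (C). A collision term has mean
`∑_i p_i² / p_i = 1`, so `E[O_n + n] = 2n - 1`, and Markov bounds `P(O_n + n ≥ ε √(2 m_n) / 2)` by
a multiple of `n / √m_n`, which tends to zero by assumption.
-/

open Finset

lemma sum_indicator_preimage_singleton {Ω α : Type*} {s : Finset α} {Y : Ω → α}
    (hYs : ∀ ω, Y ω ∈ s) (g : α → ℝ) (ω : Ω) :
    ∑ i ∈ s, (Y ⁻¹' {i}).indicator (fun _ => g i) ω = g (Y ω) := by
  classical
  simp only [Set.indicator, Set.mem_preimage, Set.mem_singleton_iff]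
  exact sum_ite_eq_of_mem s (Y ω) g (hYs ω)

section DiscreteLaw

variable {Ω α : Type*} [MeasurableSpace Ω] {μ : Measure Ω}
  [MeasurableSpace α] [MeasurableSingletonClass α]
  {s : Finset α} {q : α → ℝ} {Y Z : Ω → α}

lemma integral_comp_eq_sum_of_law [IsFiniteMeasure μ] (hq : ∀ i ∈ s, 0 ≤ q i)
    (hY : Measurable Y) (hYs : ∀ ω, Y ω ∈ s)
    (hlaw : ∀ i ∈ s, μ (Y ⁻¹' {i}) = ENNReal.ofReal (q i)) (g : α → ℝ) :
    ∫ ω, g (Y ω) ∂μ = ∑ i ∈ s, q i * g i := by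
  have hmeas : ∀ i, MeasurableSet (Y ⁻¹' {i}) := fun i => hY (measurableSet_singleton i)
  simp_rw [← sum_indicator_preimage_singleton hYs g]
  rw [integral_finsetSum _ fun i _ => (integrable_const (g i)).indicator (hmeas i)]
  refine sum_congr rfl fun i hi => ?_
  rw [integral_indicator_const (g i) (hmeas i), measureReal_def, hlaw i hi,
    ENNReal.toReal_ofReal (hq i hi), smul_eq_mul]

lemma measure_prodMk_preimage_singleton (hYZ : IndepFun Y Z μ)
    (hlawY : ∀ i ∈ s, μ (Y ⁻¹' {i}) = ENNReal.ofReal (q i))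
    (hlawZ : ∀ i ∈ s, μ (Z ⁻¹' {i}) = ENNReal.ofReal (q i))
    (hq : ∀ i ∈ s, 0 ≤ q i) {x : α × α} (hx : x ∈ s ×ˢ s) :
    μ ((fun ω => (Y ω, Z ω)) ⁻¹' {x}) = ENNReal.ofReal (q x.1 * q x.2) := by
  obtain ⟨hx1, hx2⟩ := mem_product.1 hx
  have hpre : (fun ω => (Y ω, Z ω)) ⁻¹' {x} = Y ⁻¹' {x.1} ∩ Z ⁻¹' {x.2} := by
    ext ω; simp [Prod.ext_iff]
  rw [hpre, hYZ.measure_inter_preimage_eq_mul _ _ (measurableSet_singleton _)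
    (measurableSet_singleton _), hlawY _ hx1, hlawZ _ hx2, ENNReal.ofReal_mul (hq _ hx1)]

lemma integral_ite_eq_inv_of_indepFun [DecidableEq α] [IsFiniteMeasure μ]
    (hq : ∀ i ∈ s, 0 < q i) (hY : Measurable Y) (hZ : Measurable Z)
    (hYs : ∀ ω, Y ω ∈ s) (hZs : ∀ ω, Z ω ∈ s)
    (hlawY : ∀ i ∈ s, μ (Y ⁻¹' {i}) = ENNReal.ofReal (q i))
    (hlawZ : ∀ i ∈ s, μ (Z ⁻¹' {i}) = ENNReal.ofReal (q i)) (hYZ : IndepFun Y Z μ) :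
    ∫ ω, (if Y ω = Z ω then (q (Y ω))⁻¹ else 0) ∂μ = ∑ i ∈ s, q i := by
  have hq' : ∀ i ∈ s, 0 ≤ q i := fun i hi => (hq i hi).le
  rw [integral_comp_eq_sum_of_law (s := s ×ˢ s) (q := fun x => q x.1 * q x.2)
    (fun x hx => mul_nonneg (hq' _ (mem_product.1 hx).1) (hq' _ (mem_product.1 hx).2))
    (hY.prodMk hZ) (fun ω => mem_product.2 ⟨hYs ω, hZs ω⟩)
    (fun x hx => measure_prodMk_preimage_singleton hYZ hlawY hlawZ hq' hx)
    (fun x => if x.1 = x.2 then (q x.1)⁻¹ else 0), sum_product]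
  refine sum_congr rfl fun i hi => ?_
  simp only [mul_ite, mul_zero, sum_ite_eq, if_pos hi]
  field_simp [(hq i hi).ne']

variable [Countable α]

lemma memLp_comp_of_forall_mem [IsFiniteMeasure μ] (hY : Measurable Y)
    (hYs : ∀ ω, Y ω ∈ s) (g : α → ℝ) (r : ENNReal) : MemLp (fun ω => g (Y ω)) r μ :=
  MemLp.of_bound ((measurable_of_countable g).comp hY).aestronglyMeasurable
    (∑ i ∈ s, |g i|) (ae_of_all _ fun ω =>
      single_le_sum (f := fun i => |g i|) (fun i _ => abs_nonneg (g i)) (hYs ω))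

lemma variance_comp_eq_of_law [IsProbabilityMeasure μ] (hq : ∀ i ∈ s, 0 ≤ q i)
    (hY : Measurable Y) (hYs : ∀ ω, Y ω ∈ s)
    (hlaw : ∀ i ∈ s, μ (Y ⁻¹' {i}) = ENNReal.ofReal (q i)) (g : α → ℝ) :
    variance (fun ω => g (Y ω)) μ = ∑ i ∈ s, q i * g i ^ 2 - (∑ i ∈ s, q i * g i) ^ 2 := by
  rw [variance_eq_sub (memLp_comp_of_forall_mem hY hYs g 2),
    ← integral_comp_eq_sum_of_law hq hY hYs hlaw, ← integral_comp_eq_sum_of_law hq hY hYs hlaw]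
  rfl

lemma integrable_ite_eq_inv [DecidableEq α] [IsFiniteMeasure μ] (hY : Measurable Y)
    (hZ : Measurable Z) (hYs : ∀ ω, Y ω ∈ s) (hZs : ∀ ω, Z ω ∈ s) :
    Integrable (fun ω => if Y ω = Z ω then (q (Y ω))⁻¹ else 0) μ :=
  (memLp_comp_of_forall_mem (s := s ×ˢ s) (hY.prodMk hZ)
    (fun ω => mem_product.2 ⟨hYs ω, hZs ω⟩)
    (fun x => if x.1 = x.2 then (q x.1)⁻¹ else 0) 1).integrable le_rfl

end DiscreteLaw

lemma sum_sq_sub_div_eq_sum_sq_div_sub_one {α : Type*} {s : Finset α} {f q : α → ℝ}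
    (hf : ∑ i ∈ s, f i = 1) (hq_sum : ∑ i ∈ s, q i = 1) (hq : ∀ i ∈ s, q i ≠ 0) :
    ∑ i ∈ s, (f i - q i) ^ 2 / q i = ∑ i ∈ s, f i ^ 2 / q i - 1 := by
  have hterm : ∀ i ∈ s, (f i - q i) ^ 2 / q i = f i ^ 2 / q i - 2 * f i + q i := by
    intro i hi
    field_simp [hq i hi]
    ring
  rw [sum_congr rfl hterm, sum_add_distrib, sum_sub_distrib, ← mul_sum, hf, hq_sum]
  ring

section CountingSums

variable {ι α : Type*} [DecidableEq α] {s : Finset α}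

lemma sum_count_eq_card (K : Finset ι) {x : ι → α} (hx : ∀ k ∈ K, x k ∈ s) :
    ∑ i ∈ s, ∑ k ∈ K, (if x k = i then (1 : ℝ) else 0) = K.card := by
  rw [sum_comm,
    sum_congr rfl fun k hk => sum_ite_eq_of_mem s (x k) (fun _ => (1 : ℝ)) (hx k hk)]
  simp

lemma sum_sq_count_div_eq (K : Finset ι) {x : ι → α} (hx : ∀ k ∈ K, x k ∈ s) (q : α → ℝ) :
    ∑ i ∈ s, (∑ k ∈ K, (if x k = i then (1 : ℝ) else 0)) ^ 2 / q i
      = ∑ k ∈ K, ∑ l ∈ K, if x k = x l then (q (x k))⁻¹ else 0 := by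
  have hpair : ∀ k ∈ K, ∀ l ∈ K, (if x k = x l then (q (x k))⁻¹ else 0)
      = ∑ i ∈ s, (if x k = i then (1 : ℝ) else 0) * (if x l = i then 1 else 0) / q i := by
    intro k hk l _
    rw [sum_eq_single_of_mem (x k) (hx k hk) fun i _ hi => by simp [Ne.symm hi]]
    by_cases h : x k = x l <;> simp [h, Ne.symm]
  simp_rw [sq, sum_mul_sum, sum_div]
  rw [sum_comm]
  refine sum_congr rfl fun k hk => ?_
  rw [sum_comm]
  exact (sum_congr rfl fun l hl => hpair k hk l hl).symm

end CountingSums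

noncomputable def chiSqDiag {Ω α : Type*} (q : α → ℝ) (Y : ℕ → Ω → α) (n : ℕ) (ω : Ω) : ℝ :=
  (n : ℝ)⁻¹ * ∑ k ∈ Icc 1 n, (q (Y k ω))⁻¹

noncomputable def chiSqOffDiag {Ω α : Type*} [DecidableEq α] (q : α → ℝ) (Y : ℕ → Ω → α)
    (n : ℕ) (ω : Ω) : ℝ :=
  (n : ℝ)⁻¹ * ∑ k ∈ Icc 1 n, ∑ l ∈ (Icc 1 n).erase k,
    if Y k ω = Y l ω then (q (Y k ω))⁻¹ else 0

lemma chiSq_eq_diag_add_offDiag {Ω : Type*} {m : ℕ → ℕ} {p : ℕ → ℕ → ℝ} {X : ℕ → ℕ → Ω → ℕ}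
    {n : ℕ} (hn : 1 ≤ n) (hp : ∀ i ∈ Icc 1 (m n), p n i ≠ 0)
    (hp_sum : ∑ i ∈ Icc 1 (m n), p n i = 1) (hX_range : ∀ k ω, X n k ω ∈ Icc 1 (m n))
    (ω : Ω) :
    chiSq m p X n ω = chiSqDiag (p n) (X n) n ω + chiSqOffDiag (p n) (X n) n ω - n := by
  have hn0 : (n : ℝ) ≠ 0 := by positivity
  have hcount := sum_sq_count_div_eq (Icc 1 n) (fun k _ => hX_range k ω) (p n)
  have hfreq : ∑ i ∈ Icc 1 (m n), empFreq X n i ω = 1 := by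
    simp only [empFreq]
    rw [← mul_sum, sum_count_eq_card _ fun k _ => hX_range k ω, Nat.card_Icc,
      Nat.add_sub_cancel, inv_mul_cancel₀ hn0]
  have hsplit : ∑ k ∈ Icc 1 n, ∑ l ∈ Icc 1 n,
        (if X n k ω = X n l ω then (p n (X n k ω))⁻¹ else 0)
      = ∑ k ∈ Icc 1 n, (p n (X n k ω))⁻¹ + ∑ k ∈ Icc 1 n, ∑ l ∈ (Icc 1 n).erase k,
        (if X n k ω = X n l ω then (p n (X n k ω))⁻¹ else 0) := by
    rw [← sum_add_distrib]
    exact sum_congr rfl fun k hk => by rw [← add_sum_erase _ _ hk, if_pos rfl]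
  rw [chiSq, sum_sq_sub_div_eq_sum_sq_div_sub_one hfreq hp_sum hp]
  simp only [empFreq, mul_pow, mul_div_assoc]
  rw [← mul_sum, hcount, hsplit, chiSqDiag, chiSqOffDiag]
  field_simp

lemma chiSqDiag_eq_smul_sum {Ω α : Type*} (q : α → ℝ) (Y : ℕ → Ω → α) (n : ℕ) :
    chiSqDiag q Y n = (n : ℝ)⁻¹ • ∑ k ∈ Icc 1 n, fun ω => (q (Y k ω))⁻¹ := by
  ext ω
  simp [chiSqDiag, Finset.sum_apply]

lemma chiSqOffDiag_nonneg {Ω α : Type*} [DecidableEq α] {s : Finset α} {q : α → ℝ}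
    {Y : ℕ → Ω → α} {n : ℕ} (hq : ∀ i ∈ s, 0 ≤ q i) (hYs : ∀ k ω, Y k ω ∈ s) (ω : Ω) :
    0 ≤ chiSqOffDiag q Y n ω :=
  mul_nonneg (by positivity) <| sum_nonneg fun k _ => sum_nonneg fun _ _ => by
    split_ifs
    exacts [inv_nonneg.2 (hq _ (hYs k ω)), le_rfl]

section Moments

variable {Ω α : Type*} [MeasurableSpace Ω] {μ : Measure Ω}
  [MeasurableSpace α] [MeasurableSingletonClass α] [Countable α]
  {s : Finset α} {q : α → ℝ} {Y : ℕ → Ω → α} {n : ℕ}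

lemma memLp_chiSqDiag [IsFiniteMeasure μ] (hY : ∀ k, Measurable (Y k))
    (hYs : ∀ k ω, Y k ω ∈ s) (r : ENNReal) : MemLp (chiSqDiag q Y n) r μ := by
  rw [chiSqDiag_eq_smul_sum]
  exact (memLp_finsetSum' _ fun k _ =>
    memLp_comp_of_forall_mem (hY k) (hYs k) (fun i => (q i)⁻¹) r).const_smul _

lemma integral_chiSqDiag [IsFiniteMeasure μ] (hn : 1 ≤ n) (hq : ∀ i ∈ s, 0 < q i)
    (hY : ∀ k, Measurable (Y k)) (hYs : ∀ k ω, Y k ω ∈ s)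
    (hlaw : ∀ k, ∀ i ∈ s, μ (Y k ⁻¹' {i}) = ENNReal.ofReal (q i)) :
    ∫ ω, chiSqDiag q Y n ω ∂μ = s.card := by
  have hterm : ∀ k, ∫ ω, (q (Y k ω))⁻¹ ∂μ = s.card := fun k => by
    rw [integral_comp_eq_sum_of_law (fun i hi => (hq i hi).le) (hY k) (hYs k) (hlaw k)
        (fun i => (q i)⁻¹),
      sum_congr rfl fun i hi => mul_inv_cancel₀ (hq i hi).ne', sum_const, nsmul_one]
  have hn0 : (n : ℝ) ≠ 0 := by positivity
  simp only [chiSqDiag]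
  rw [integral_const_mul, integral_finsetSum _ fun k _ =>
    (memLp_comp_of_forall_mem (hY k) (hYs k) (fun i => (q i)⁻¹) 1).integrable le_rfl]
  simp only [hterm, sum_const, Nat.card_Icc, Nat.add_sub_cancel, nsmul_eq_mul]
  field_simp

lemma variance_chiSqDiag [IsProbabilityMeasure μ] (hq : ∀ i ∈ s, 0 ≤ q i)
    (hY : ∀ k, Measurable (Y k)) (hYs : ∀ k ω, Y k ω ∈ s)
    (hlaw : ∀ k, ∀ i ∈ s, μ (Y k ⁻¹' {i}) = ENNReal.ofReal (q i)) (hindep : iIndepFun Y μ) :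
    variance (chiSqDiag q Y n) μ = variance (fun ω => (q (Y 1 ω))⁻¹) μ / n := by
  have hcomp : iIndepFun (fun k ω => (q (Y k ω))⁻¹) μ :=
    hindep.comp (fun _ i => (q i)⁻¹) fun _ => measurable_of_countable _
  have hvar : ∀ k, variance (fun ω => (q (Y k ω))⁻¹) μ
      = variance (fun ω => (q (Y 1 ω))⁻¹) μ := fun k => by
    rw [variance_comp_eq_of_law hq (hY k) (hYs k) (hlaw k) (fun i => (q i)⁻¹),
      variance_comp_eq_of_law hq (hY 1) (hYs 1) (hlaw 1) (fun i => (q i)⁻¹)]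
  rw [chiSqDiag_eq_smul_sum, variance_smul, IndepFun.variance_sum
    (fun k _ => memLp_comp_of_forall_mem (hY k) (hYs k) (fun i => (q i)⁻¹) 2)
    (fun k _ l _ hkl => hcomp.indepFun hkl)]
  simp only [hvar, sum_const, Nat.card_Icc, Nat.add_sub_cancel, nsmul_eq_mul]
  rcases n.eq_zero_or_pos with rfl | hn
  · simp
  · field_simp

variable [DecidableEq α]

lemma integrable_chiSqOffDiag [IsFiniteMeasure μ] (hY : ∀ k, Measurable (Y k))
    (hYs : ∀ k ω, Y k ω ∈ s) : Integrable (chiSqOffDiag q Y n) μ :=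
  (integrable_finsetSum _ fun k _ => integrable_finsetSum _ fun l _ =>
    integrable_ite_eq_inv (hY k) (hY l) (hYs k) (hYs l)).const_mul _

lemma integral_chiSqOffDiag [IsFiniteMeasure μ] (hn : 1 ≤ n) (hq : ∀ i ∈ s, 0 < q i)
    (hq_sum : ∑ i ∈ s, q i = 1) (hY : ∀ k, Measurable (Y k)) (hYs : ∀ k ω, Y k ω ∈ s)
    (hlaw : ∀ k, ∀ i ∈ s, μ (Y k ⁻¹' {i}) = ENNReal.ofReal (q i)) (hindep : iIndepFun Y μ) :
    ∫ ω, chiSqOffDiag q Y n ω ∂μ = n - 1 := by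
  have hpair : ∀ k, ∀ l ∈ (Icc 1 n).erase k,
      ∫ ω, (if Y k ω = Y l ω then (q (Y k ω))⁻¹ else 0) ∂μ = 1 := fun k l hl => by
    rw [integral_ite_eq_inv_of_indepFun hq (hY k) (hY l) (hYs k) (hYs l) (hlaw k) (hlaw l)
      (hindep.indepFun (ne_of_mem_erase hl).symm), hq_sum]
  have hrow : ∀ k ∈ Icc 1 n, ∫ ω, ∑ l ∈ (Icc 1 n).erase k,
      (if Y k ω = Y l ω then (q (Y k ω))⁻¹ else 0) ∂μ = n - 1 := fun k hk => by
    rw [integral_finsetSum _ fun l _ => integrable_ite_eq_inv (hY k) (hY l) (hYs k) (hYs l),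
      sum_congr rfl (hpair k), sum_const, card_erase_of_mem hk, Nat.card_Icc, nsmul_one,
      Nat.add_sub_cancel, Nat.cast_sub hn, Nat.cast_one]
  have hn0 : (n : ℝ) ≠ 0 := by positivity
  simp only [chiSqOffDiag]
  rw [integral_const_mul, integral_finsetSum _ fun k _ => integrable_finsetSum _ fun l _ =>
    integrable_ite_eq_inv (hY k) (hY l) (hYs k) (hYs l), sum_congr rfl hrow, sum_const,
    Nat.card_Icc, Nat.add_sub_cancel, nsmul_eq_mul]
  field_simp

end Moments

lemma measure_ge_le_ofReal_integral_div {Ω : Type*} [MeasurableSpace Ω] {μ : Measure Ω}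
    [IsFiniteMeasure μ] {f : Ω → ℝ} (hf : 0 ≤ᵐ[μ] f) (hf_int : Integrable f μ) {c : ℝ}
    (hc : 0 < c) : μ {ω | c ≤ f ω} ≤ ENNReal.ofReal ((∫ ω, f ω ∂μ) / c) := by
  rw [ENNReal.le_ofReal_iff_toReal_le (measure_ne_top _ _)
    (div_nonneg (integral_nonneg_of_ae hf) hc.le), le_div_iff₀' hc]
  exact mul_meas_ge_le_integral_of_nonneg hf hf_int c

section ChiSqTail

variable {Ω : Type*} [MeasurableSpace Ω] {μ : Measure Ω} [IsProbabilityMeasure μ]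
  {m : ℕ → ℕ} {p : ℕ → ℕ → ℝ} {X : ℕ → ℕ → Ω → ℕ} {n : ℕ}

lemma measure_abs_chiSq_sub_ge_le (hn : 1 ≤ n) (hp_pos : ∀ i ∈ Icc 1 (m n), 0 < p n i)
    (hp_sum : ∑ i ∈ Icc 1 (m n), p n i = 1) (hX_meas : ∀ k, Measurable (X n k))
    (hX_range : ∀ k ω, X n k ω ∈ Icc 1 (m n))
    (hX_law : ∀ k, ∀ i ∈ Icc 1 (m n), μ (X n k ⁻¹' {i}) = ENNReal.ofReal (p n i))
    (hX_indep : iIndepFun (X n) μ) {c : ℝ} (hc : 0 < c) :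
    μ {ω | 2 * c ≤ |chiSq m p X n ω - m n|}
      ≤ ENNReal.ofReal (variance (fun ω => (p n (X n 1 ω))⁻¹) μ / (n * c ^ 2))
        + ENNReal.ofReal (2 * n / c) := by
  set D := chiSqDiag (p n) (X n) n
  set O := chiSqOffDiag (p n) (X n) n
  have hp_nonneg : ∀ i ∈ Icc 1 (m n), 0 ≤ p n i := fun i hi => (hp_pos i hi).le
  have hO_nonneg : ∀ ω, 0 ≤ O ω := chiSqOffDiag_nonneg hp_nonneg hX_range
  have hdecomp : ∀ ω, chiSq m p X n ω = D ω + O ω - n :=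
    chiSq_eq_diag_add_offDiag hn (fun i hi => (hp_pos i hi).ne') hp_sum hX_range
  have hD_mean : ∫ ω, D ω ∂μ = m n := by
    rw [integral_chiSqDiag hn hp_pos hX_meas hX_range hX_law, Nat.card_Icc, Nat.add_sub_cancel]
  have hsub : {ω | 2 * c ≤ |chiSq m p X n ω - m n|}
      ⊆ {ω | c ≤ |D ω - ∫ ω, D ω ∂μ|} ∪ {ω | c ≤ O ω + n} := by
    intro ω hω
    by_contra! hcon
    simp only [Set.mem_union, Set.mem_ofPred_eq, not_or, not_le, hD_mean] at hω hcon
    have hO : |O ω - n| ≤ O ω + n := abs_le.2 ⟨by linarith [hO_nonneg ω], by linarith⟩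
    have : |chiSq m p X n ω - m n| < 2 * c := calc
      |chiSq m p X n ω - m n| = |(D ω - m n) + (O ω - n)| := by
        rw [hdecomp]
        congr 1
        ring
      _ ≤ |D ω - m n| + |O ω - n| := abs_add_le _ _
      _ < 2 * c := by linarith
    linarith
  refine (measure_mono hsub).trans ((measure_union_le _ _).trans (add_le_add ?_ ?_))
  · refine (meas_ge_le_variance_div_sq (memLp_chiSqDiag hX_meas hX_range 2) hc).trans
      (ENNReal.ofReal_le_ofReal (le_of_eq ?_))
    rw [variance_chiSqDiag hp_nonneg hX_meas hX_range hX_law hX_indep, div_div]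
  · have hO_int := integral_chiSqOffDiag hn hp_pos hp_sum hX_meas hX_range hX_law hX_indep
    refine (measure_ge_le_ofReal_integral_div (f := fun ω => O ω + n)
      (ae_of_all _ fun ω => add_nonneg (hO_nonneg ω) n.cast_nonneg)
      ((integrable_chiSqOffDiag hX_meas hX_range).add (integrable_const _)) hc).trans
      (ENNReal.ofReal_le_ofReal (div_le_div_of_nonneg_right ?_ hc.le))
    rw [integral_add (integrable_chiSqOffDiag hX_meas hX_range) (integrable_const _), hO_int,
      integral_const, probReal_univ, one_smul]
    linarith

lemma measure_dist_normalized_chiSq_ge_le (hn : 1 ≤ n) (hp_pos : ∀ i ∈ Icc 1 (m n), 0 < p n i)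
    (hp_sum : ∑ i ∈ Icc 1 (m n), p n i = 1) (hX_meas : ∀ k, Measurable (X n k))
    (hX_range : ∀ k ω, X n k ω ∈ Icc 1 (m n))
    (hX_law : ∀ k, ∀ i ∈ Icc 1 (m n), μ (X n k ⁻¹' {i}) = ENNReal.ofReal (p n i))
    (hX_indep : iIndepFun (X n) μ) {ε : ℝ} (hε : 0 < ε) :
    μ {ω | ε ≤ dist ((chiSq m p X n ω - m n) / √(2 * m n)) 0}
      ≤ ENNReal.ofReal
          (2 / ε ^ 2 * (((m n : ℝ) * n)⁻¹ * variance (fun ω => (p n (X n 1 ω))⁻¹) μ))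
        + ENNReal.ofReal (4 / (ε * √2) * (n / √(m n))) := by
  obtain ⟨ω₀⟩ := nonempty_of_isProbabilityMeasure μ
  have hm : (0 : ℝ) < m n := by
    have := mem_Icc.1 (hX_range 1 ω₀)
    exact_mod_cast this.1.trans this.2
  have hn0 : (0 : ℝ) < n := by exact_mod_cast hn
  have hsqrt_pos : 0 < √(2 * m n) := by positivity
  have hsub : {ω | ε ≤ dist ((chiSq m p X n ω - m n) / √(2 * m n)) 0}
      ⊆ {ω | 2 * (ε * √(2 * m n) / 2) ≤ |chiSq m p X n ω - m n|} := fun ω hω => by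
    simp only [Set.mem_ofPred_eq, Real.dist_0_eq_abs, abs_div, abs_of_pos hsqrt_pos,
      le_div_iff₀ hsqrt_pos] at hω ⊢
    linarith
  refine (measure_mono hsub).trans <| (measure_abs_chiSq_sub_ge_le hn hp_pos hp_sum hX_meas
    hX_range hX_law hX_indep (by positivity)).trans (add_le_add (le_of_eq ?_) (le_of_eq ?_))
  · congr 1
    rw [div_pow, mul_pow, Real.sq_sqrt (by positivity)]
    field_simp
  · congr 1
    rw [Real.sqrt_mul zero_le_two]
    field_simp
    norm_num

end ChiSqTail

theorem chisq_degenerate_limit_general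
    {Ω : Type*} [MeasurableSpace Ω] (μ : Measure Ω) [IsProbabilityMeasure μ]
    (m : ℕ → ℕ) (p : ℕ → ℕ → ℝ) (X : ℕ → ℕ → Ω → ℕ)
    (hp_pos : ∀ n : ℕ, ∀ i ∈ Finset.Icc 1 (m n), 0 < p n i)
    (hp_sum : ∀ n : ℕ, ∑ i ∈ Finset.Icc 1 (m n), p n i = 1)
    (hX_meas : ∀ n k, Measurable (X n k))
    (hX_range : ∀ n k ω, X n k ω ∈ Finset.Icc 1 (m n))
    (hX_law : ∀ n k, ∀ i ∈ Finset.Icc 1 (m n), μ (X n k ⁻¹' {i}) = ENNReal.ofReal (p n i))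
    (hX_indep : ∀ n : ℕ, iIndepFun (X n) μ)
    (hC : Filter.Tendsto (fun n : ℕ => ((m n : ℝ) * (n : ℝ))⁻¹ *
        ProbabilityTheory.variance (fun ω => (p n (X n 1 ω))⁻¹) μ) Filter.atTop (nhds 0))
    (hrate : Filter.Tendsto (fun n : ℕ => (n : ℝ) / Real.sqrt (m n)) Filter.atTop (nhds 0))
    :
    MeasureTheory.TendstoInMeasure μ
      (fun n ω => (chiSq m p X n ω - (m n : ℝ)) / Real.sqrt (2 * (m n : ℝ)))
      Filter.atTop (fun _ => (0 : ℝ)) := by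
  rw [tendstoInMeasure_iff_dist]
  intro ε hε
  have hbound := (ENNReal.tendsto_ofReal (hC.const_mul (2 / ε ^ 2))).add
    (ENNReal.tendsto_ofReal (hrate.const_mul (4 / (ε * √2))))
  simp only [mul_zero, ENNReal.ofReal_zero, add_zero] at hbound
  refine tendsto_of_tendsto_of_tendsto_of_le_of_le' tendsto_const_nhds hbound
    (Eventually.of_forall fun _ => zero_le) ?_
  filter_upwards [eventually_ge_atTop 1] with n hn
  exact measure_dist_normalized_chiSq_ge_le hn (hp_pos n) (hp_sum n) (hX_meas n) (hX_range n)
    (hX_law n) (hX_indep n) hε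

theorem chisq_degenerate_limit
    {Ω : Type*} [MeasurableSpace Ω] (μ : Measure Ω) [IsProbabilityMeasure μ]
    (m : ℕ → ℕ) (p : ℕ → ℕ → ℝ) (X : ℕ → ℕ → Ω → ℕ)
    (hp_pos : ∀ n : ℕ, ∀ i ∈ Finset.Icc 1 (m n), 0 < p n i)
    (hp_sum : ∀ n : ℕ, ∑ i ∈ Finset.Icc 1 (m n), p n i = 1)
    (hX_meas : ∀ n k, Measurable (X n k))
    (hX_range : ∀ n k ω, X n k ω ∈ Finset.Icc 1 (m n))
    (hX_law : ∀ n k, ∀ i ∈ Finset.Icc 1 (m n), μ (X n k ⁻¹' {i}) = ENNReal.ofReal (p n i))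
    (hX_indep : ∀ n : ℕ, iIndepFun (X n) μ)
    (hm : Filter.Tendsto m Filter.atTop Filter.atTop)
    (hC : Filter.Tendsto (fun n : ℕ => ((m n : ℝ) * (n : ℝ))⁻¹ *
        ProbabilityTheory.variance (fun ω => (p n (X n 1 ω))⁻¹) μ) Filter.atTop (nhds 0))
    (hrate : Filter.Tendsto (fun n : ℕ => (n : ℝ) / Real.sqrt (m n)) Filter.atTop (nhds 0))
    :
    MeasureTheory.TendstoInMeasure μ
      (fun n ω => (chiSq m p X n ω - (m n : ℝ)) / Real.sqrt (2 * (m n : ℝ)))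
      Filter.atTop (fun _ => (0 : ℝ)) :=
  chisq_degenerate_limit_general μ m p X hp_pos hp_sum hX_meas hX_range hX_law hX_indep hC hrate
end

section
/- Suppose p_n(i) = m_n^{-1} for i = 1,…,m_n (the uniform distribution) and n/√(m_n) → 0 as n → ∞ with m_n → ∞. Then (χ²_n − m_n)/√(2 m_n) converges in distribution (equivalently, in probability) to 0. -/
open MeasureTheory ProbabilityTheory Filter
open scoped BoundedContinuousFunction ENNReal Topology

/-!
With m cells and n ≪ √m draws, with high probability no two draws fall into the same cell. On
that event every cell count is 0 or 1, and for the uniform law the statistic is exactly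
χ² = m - n, so (χ² - m)/√(2m) = -n/√(2m) → 0. By the union bound over the n² pairs of draws,
each colliding with probability 1/m, the event fails with probability at most n²/m → 0.
-/

section Counting

variable {α ι : Type*} [DecidableEq α] {f : ι → α} {s : Finset ι}

lemma sum_sum_ite_eq_card {t : Finset α} (hf : ∀ k ∈ s, f k ∈ t) :
    ∑ i ∈ t, ∑ k ∈ s, (if f k = i then (1 : ℝ) else 0) = s.card := by
  rw [Finset.sum_comm]
  calc _ = ∑ k ∈ s, (1 : ℝ) :=
        Finset.sum_congr rfl fun k hk => by rw [Finset.sum_ite_eq, if_pos (hf k hk)]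
    _ = s.card := by simp

lemma sum_ite_eq_sq_of_injOn (hf : Set.InjOn f s) (i : α) :
    (∑ k ∈ s, (if f k = i then (1 : ℝ) else 0)) ^ 2
      = ∑ k ∈ s, (if f k = i then (1 : ℝ) else 0) := by
  have hcard : (s.filter (f · = i)).card ≤ 1 := Finset.card_le_one.2 fun k hk l hl => by
    rw [Finset.mem_filter] at hk hl
    exact hf hk.1 hl.1 (hk.2.trans hl.2.symm)
  rw [← Finset.sum_filter, Finset.sum_const, nsmul_one]
  interval_cases (s.filter (f · = i)).card <;> norm_num

end Counting

lemma chiSq_eq_of_injOn {Ω : Type*} (m : ℕ → ℕ) (p : ℕ → ℕ → ℝ) (X : ℕ → ℕ → Ω → ℕ)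
    (n : ℕ) (ω : Ω) (hn : n ≠ 0) (hX_range : ∀ k, X n k ω ∈ Finset.Icc 1 (m n))
    (hp_unif : ∀ i ∈ Finset.Icc 1 (m n), p n i = (m n : ℝ)⁻¹)
    (hinj : Set.InjOn (fun k => X n k ω) (Finset.Icc 1 n)) :
    chiSq m p X n ω = m n - n := by
  have hm : (m n : ℝ) ≠ 0 := by
    have := Finset.mem_Icc.1 (hX_range 0)
    exact_mod_cast (by omega : m n ≠ 0)
  set c : ℕ → ℝ := fun i => ∑ k ∈ Finset.Icc 1 n, (if X n k ω = i then (1 : ℝ) else 0)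
  have hsummand : ∀ i ∈ Finset.Icc 1 (m n), (empFreq X n i ω - p n i) ^ 2 / p n i
      = (m n * (n : ℝ)⁻¹ ^ 2 - 2 * (n : ℝ)⁻¹) * c i + (m n : ℝ)⁻¹ := by
    intro i hi
    have hsq : c i ^ 2 = c i := sum_ite_eq_sq_of_injOn hinj i
    rw [empFreq, hp_unif i hi]
    field_simp
    linear_combination (m n : ℝ) ^ 2 * hsq
  have hcount : ∑ i ∈ Finset.Icc 1 (m n), c i = n :=
    (sum_sum_ite_eq_card fun k _ => hX_range k).trans (by simp)
  rw [chiSq, Finset.sum_congr rfl hsummand, Finset.sum_add_distrib, ← Finset.mul_sum, hcount,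
    Finset.sum_const, Nat.card_Icc, nsmul_eq_mul, Nat.add_sub_cancel]
  field_simp
  ring

lemma measure_not_injOn_le {Ω ι α : Type*} [MeasurableSpace Ω] {μ : Measure Ω}
    (Y : ι → Ω → α) (s : Finset ι) (q : ℝ≥0∞)
    (hq : ∀ k ∈ s, ∀ l ∈ s, k ≠ l → μ {ω | Y k ω = Y l ω} ≤ q) :
    μ {ω | ¬ Set.InjOn (fun k => Y k ω) s} ≤ s.card ^ 2 * q := by
  classical
  have hsub : {ω | ¬ Set.InjOn (fun k => Y k ω) s}
      ⊆ ⋃ kl ∈ s.offDiag, {ω | Y kl.1 ω = Y kl.2 ω} := by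
    intro ω hω
    obtain ⟨k, hk, l, hl, heq, hkl⟩ : ∃ k ∈ s, ∃ l ∈ s, Y k ω = Y l ω ∧ k ≠ l := by
      simpa [Set.InjOn] using hω
    exact Set.mem_biUnion (x := (k, l)) (Finset.mem_offDiag.2 ⟨hk, hl, hkl⟩) heq
  calc μ {ω | ¬ Set.InjOn (fun k => Y k ω) s}
      ≤ ∑ kl ∈ s.offDiag, μ {ω | Y kl.1 ω = Y kl.2 ω} :=
        (measure_mono hsub).trans (measure_biUnion_finset_le _ _)
    _ ≤ s.offDiag.card • q := Finset.sum_le_card_nsmul _ _ _ fun kl hkl => by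
        obtain ⟨hk, hl, hne⟩ := Finset.mem_offDiag.1 hkl
        exact hq _ hk _ hl hne
    _ ≤ s.card ^ 2 * q := by
        rw [nsmul_eq_mul, Finset.offDiag_card, sq]
        gcongr
        exact_mod_cast Nat.sub_le _ _

namespace ProbabilityTheory

variable {Ω α : Type*} [MeasurableSpace Ω] {μ : Measure Ω} [MeasurableSpace α]
  [MeasurableSingletonClass α]

lemma IndepFun.measure_eq_le_sum_mul {Y Z : Ω → α} (h : IndepFun Y Z μ) (s : Finset α)
    (hY : ∀ ω, Y ω ∈ s) :
    μ {ω | Y ω = Z ω} ≤ ∑ i ∈ s, μ (Y ⁻¹' {i}) * μ (Z ⁻¹' {i}) := by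
  have hsub : {ω | Y ω = Z ω} ⊆ ⋃ i ∈ s, Y ⁻¹' {i} ∩ Z ⁻¹' {i} := fun ω hω =>
    Set.mem_biUnion (hY ω) ⟨rfl, hω.symm⟩
  calc μ {ω | Y ω = Z ω} ≤ ∑ i ∈ s, μ (Y ⁻¹' {i} ∩ Z ⁻¹' {i}) :=
        (measure_mono hsub).trans (measure_biUnion_finset_le _ _)
    _ = ∑ i ∈ s, μ (Y ⁻¹' {i}) * μ (Z ⁻¹' {i}) := by
        refine Finset.sum_congr rfl fun i _ => ?_
        exact h.measure_inter_preimage_eq_mul _ _ (measurableSet_singleton i)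
          (measurableSet_singleton i)

lemma IndepFun.measure_eq_le_inv_card_of_uniform {Y Z : Ω → α} (h : IndepFun Y Z μ)
    (s : Finset α) (hY : ∀ ω, Y ω ∈ s) (hY_law : ∀ i ∈ s, μ (Y ⁻¹' {i}) = (s.card : ℝ≥0∞)⁻¹)
    (hZ_law : ∀ i ∈ s, μ (Z ⁻¹' {i}) = (s.card : ℝ≥0∞)⁻¹) :
    μ {ω | Y ω = Z ω} ≤ (s.card : ℝ≥0∞)⁻¹ := by
  obtain hs | hs := eq_or_ne (s.card : ℝ≥0∞) 0
  · simp [hs]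
  calc μ {ω | Y ω = Z ω} ≤ ∑ i ∈ s, μ (Y ⁻¹' {i}) * μ (Z ⁻¹' {i}) :=
        h.measure_eq_le_sum_mul s hY
    _ = s.card * ((s.card : ℝ≥0∞)⁻¹ * (s.card : ℝ≥0∞)⁻¹) := by
        rw [Finset.sum_congr rfl fun i hi => by rw [hY_law i hi, hZ_law i hi], Finset.sum_const,
          nsmul_eq_mul]
    _ = (s.card : ℝ≥0∞)⁻¹ := by
        rw [← mul_assoc, ENNReal.mul_inv_cancel hs (ENNReal.natCast_ne_top _), one_mul]

lemma iIndepFun.measure_not_injOn_le_of_uniform {ι : Type*} {Y : ι → Ω → α}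
    (hY : iIndepFun Y μ) (t : Finset α) (hY_range : ∀ k ω, Y k ω ∈ t)
    (hY_law : ∀ k, ∀ i ∈ t, μ (Y k ⁻¹' {i}) = (t.card : ℝ≥0∞)⁻¹) (s : Finset ι) :
    μ {ω | ¬ Set.InjOn (fun k => Y k ω) s} ≤ s.card ^ 2 * (t.card : ℝ≥0∞)⁻¹ :=
  measure_not_injOn_le Y s _ fun k _ l _ hkl =>
    (hY.indepFun hkl).measure_eq_le_inv_card_of_uniform t (hY_range k) (hY_law k) (hY_law l)

end ProbabilityTheory

lemma tendsto_sq_mul_inv_of_tendsto_div_sqrt {ι : Type*} {l : Filter ι} {a b : ι → ℕ}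
    (hb : ∀ᶠ n in l, b n ≠ 0) (hab : Tendsto (fun n => (a n : ℝ) / √(b n)) l (𝓝 0)) :
    Tendsto (fun n => (a n : ℝ≥0∞) ^ 2 * (b n : ℝ≥0∞)⁻¹) l (𝓝 0) := by
  have hsq : Tendsto (fun n => ENNReal.ofReal (((a n : ℝ) / √(b n)) ^ 2)) l (𝓝 0) := by
    simpa using ENNReal.tendsto_ofReal (hab.pow 2)
  refine hsq.congr' ?_
  filter_upwards [hb] with n hbn
  have hb_pos : (0 : ℝ) < b n := by positivity
  rw [div_pow, Real.sq_sqrt hb_pos.le, ENNReal.ofReal_div_of_pos hb_pos,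
    ENNReal.ofReal_pow (Nat.cast_nonneg _), ENNReal.ofReal_natCast, ENNReal.ofReal_natCast,
    div_eq_mul_inv]

lemma tendsto_div_sqrt_two_mul {ι : Type*} {l : Filter ι} {a b : ι → ℝ}
    (hab : Tendsto (fun n => a n / √(b n)) l (𝓝 0)) :
    Tendsto (fun n => a n / √(2 * b n)) l (𝓝 0) := by
  convert hab.const_mul (√2)⁻¹ using 2 with n
  · rw [Real.sqrt_mul zero_le_two]
    ring
  · simp

theorem chisq_uniform_degenerate_limit_general
    {Ω : Type*} [MeasurableSpace Ω] (μ : Measure Ω)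
    (m : ℕ → ℕ) (p : ℕ → ℕ → ℝ) (X : ℕ → ℕ → Ω → ℕ)
    (hX_range : ∀ n k ω, X n k ω ∈ Finset.Icc 1 (m n))
    (hX_law : ∀ n k, ∀ i ∈ Finset.Icc 1 (m n), μ (X n k ⁻¹' {i}) = ENNReal.ofReal (p n i))
    (hX_indep : ∀ n : ℕ, iIndepFun (X n) μ)
    (hp_unif : ∀ n : ℕ, ∀ i ∈ Finset.Icc 1 (m n), p n i = (m n : ℝ)⁻¹)
    (hm : Filter.Tendsto m Filter.atTop Filter.atTop)
    (hrate : Filter.Tendsto (fun n : ℕ => (n : ℝ) / Real.sqrt (m n)) Filter.atTop (nhds 0))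
    :
    MeasureTheory.TendstoInMeasure μ
      (fun n ω => (chiSq m p X n ω - (m n : ℝ)) / Real.sqrt (2 * (m n : ℝ)))
      Filter.atTop (fun _ => (0 : ℝ)) := by
  have hlaw : ∀ n k, ∀ i ∈ Finset.Icc 1 (m n),
      μ (X n k ⁻¹' {i}) = ((Finset.Icc 1 (m n)).card : ℝ≥0∞)⁻¹ := by
    intro n k i hi
    have hm_pos : 0 < m n := (Finset.mem_Icc.1 hi).1.trans (Finset.mem_Icc.1 hi).2
    rw [hX_law n k i hi, hp_unif n i hi, Nat.card_Icc, Nat.add_sub_cancel,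
      ENNReal.ofReal_inv_of_pos (Nat.cast_pos.2 hm_pos), ENNReal.ofReal_natCast]
  have hcollide : ∀ n, μ {ω | ¬ Set.InjOn (fun k => X n k ω) (Finset.Icc 1 n)}
      ≤ (n : ℝ≥0∞) ^ 2 * (m n : ℝ≥0∞)⁻¹ := fun n => by
    simpa using
      (hX_indep n).measure_not_injOn_le_of_uniform _ (hX_range n) (hlaw n) (Finset.Icc 1 n)
  refine tendstoInMeasure_iff_dist.2 fun ε hε => tendsto_of_tendsto_of_tendsto_of_le_of_le'
    tendsto_const_nhds (tendsto_sq_mul_inv_of_tendsto_div_sqrt (a := id)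
      (hm.eventually_ne_atTop 0) hrate) (Eventually.of_forall fun _ => zero_le) ?_
  filter_upwards [eventually_ne_atTop 0,
    (tendsto_div_sqrt_two_mul hrate).eventually (gt_mem_nhds hε)] with n hn hlt
  refine (measure_mono fun ω hω hinj => ?_).trans (hcollide n)
  have hdist : dist ((chiSq m p X n ω - m n) / √(2 * m n)) 0 = n / √(2 * m n) := by
    rw [chiSq_eq_of_injOn m p X n ω hn (hX_range n · ω) (hp_unif n) hinj, Real.dist_eq,
      sub_zero, sub_sub_cancel_left, neg_div, abs_neg, abs_of_nonneg (by positivity)]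
  exact absurd (hdist ▸ hω) (not_le.2 hlt)

theorem chisq_uniform_degenerate_limit
    {Ω : Type*} [MeasurableSpace Ω] (μ : Measure Ω) [IsProbabilityMeasure μ]
    (m : ℕ → ℕ) (p : ℕ → ℕ → ℝ) (X : ℕ → ℕ → Ω → ℕ)
    (hp_pos : ∀ n : ℕ, ∀ i ∈ Finset.Icc 1 (m n), 0 < p n i)
    (hp_sum : ∀ n : ℕ, ∑ i ∈ Finset.Icc 1 (m n), p n i = 1)
    (hX_meas : ∀ n k, Measurable (X n k))
    (hX_range : ∀ n k ω, X n k ω ∈ Finset.Icc 1 (m n))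
    (hX_law : ∀ n k, ∀ i ∈ Finset.Icc 1 (m n), μ (X n k ⁻¹' {i}) = ENNReal.ofReal (p n i))
    (hX_indep : ∀ n : ℕ, iIndepFun (X n) μ)
    (hp_unif : ∀ n : ℕ, ∀ i ∈ Finset.Icc 1 (m n), p n i = (m n : ℝ)⁻¹)
    (hm : Filter.Tendsto m Filter.atTop Filter.atTop)
    (hrate : Filter.Tendsto (fun n : ℕ => (n : ℝ) / Real.sqrt (m n)) Filter.atTop (nhds 0))
    :
    MeasureTheory.TendstoInMeasure μ
      (fun n ω => (chiSq m p X n ω - (m n : ℝ)) / Real.sqrt (2 * (m n : ℝ)))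
      Filter.atTop (fun _ => (0 : ℝ)) :=
  chisq_uniform_degenerate_limit_general μ m p X hX_range hX_law hX_indep hp_unif hm hrate
end

section
/- With U_n = Σ_{1≤k≠l≤n} I(X_{n,k}=X_{n,l})/p_n(X_{n,k}) and S_n = Σ_{k=1}^n p_n^{-1}(X_{n,k}), the covariance Cov(U_n, S_n) = 0. -/
open MeasureTheory ProbabilityTheory Filter
open scoped BoundedContinuousFunction

noncomputable def Ustat {Ω : Type*} (p : ℕ → ℕ → ℝ) (X : ℕ → ℕ → Ω → ℕ) (n : ℕ) (ω : Ω) : ℝ :=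
  ∑ k ∈ Finset.Icc 1 n, ∑ l ∈ Finset.Icc 1 n,
    if k ≠ l then (if X n k ω = X n l ω then (1 : ℝ) else 0) / p n (X n k ω) else 0

noncomputable def Sstat {Ω : Type*} (p : ℕ → ℕ → ℝ) (X : ℕ → ℕ → Ω → ℕ) (n : ℕ) (ω : Ω) : ℝ :=
  ∑ k ∈ Finset.Icc 1 n, (p n (X n k ω))⁻¹

/-!
Expand `Cov(U, S)` bilinearly into the terms `Cov(f(X_k, X_l), 1 / p(X_j))` with `k ≠ l`, where
`f(i, j) = 1{i = j} / p(i)`. When `j ∉ {k, l}` the two factors are independent. Otherwise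
we use that `f` is symmetric and degenerate: its mean in one argument, `∑ j, p(j) f(i, j)`, is the
constant `1`, so `f(X_k, X_l)` is uncorrelated with every function of `X_k` (or of `X_l`).
-/

namespace ProbabilityTheory

section Pair

variable {Ω α β : Type*} [MeasurableSpace Ω] {μ : Measure Ω}
  [MeasurableSpace α] [MeasurableSingletonClass α] [MeasurableSpace β] [MeasurableSingletonClass β]
  {X : Ω → α} {Y : Ω → β} {I : Finset α} {J : Finset β}

lemma memLp_comp_of_forall_mem_finset [Countable α] [IsFiniteMeasure μ] (hX : Measurable X)
    (hI : ∀ ω, X ω ∈ I) (F : α → ℝ) (q : ENNReal) : MemLp (fun ω ↦ F (X ω)) q μ :=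
  MemLp.of_bound ((measurable_of_countable F).comp hX).aestronglyMeasurable (∑ i ∈ I, ‖F i‖)
    (ae_of_all _ fun ω ↦ Finset.single_le_sum (f := fun i ↦ ‖F i‖)
      (fun _ _ ↦ norm_nonneg _) (hI ω))

lemma integral_comp_eq_sum_of_forall_mem_finset [IsFiniteMeasure μ] (hX : Measurable X)
    (hI : ∀ ω, X ω ∈ I) (F : α → ℝ) :
    ∫ ω, F (X ω) ∂μ = ∑ i ∈ I, μ.real (X ⁻¹' {i}) * F i := by
  classical
  have hmeas (i : α) : MeasurableSet (X ⁻¹' {i}) := hX (measurableSet_singleton i)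
  have hdecomp : (fun ω ↦ F (X ω)) = fun ω ↦ ∑ i ∈ I, (X ⁻¹' {i}).indicator (fun _ ↦ F i) ω := by
    ext ω
    simp only [Set.indicator_apply, Set.mem_preimage, Set.mem_singleton_iff,
      Finset.sum_ite_eq, if_pos (hI ω)]
  rw [hdecomp, integral_finsetSum _ fun i _ ↦ (integrable_const _).indicator (hmeas i)]
  exact Finset.sum_congr rfl fun i _ ↦ integral_indicator_const _ (hmeas i)

lemma sum_measureReal_preimage_singleton [IsProbabilityMeasure μ] (hX : Measurable X)
    (hI : ∀ ω, X ω ∈ I) : ∑ i ∈ I, μ.real (X ⁻¹' {i}) = 1 := by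
  simpa using (integral_comp_eq_sum_of_forall_mem_finset (μ := μ) hX hI fun _ ↦ (1 : ℝ)).symm

lemma IndepFun.integral_comp₂_eq_sum_sum [IsFiniteMeasure μ] (hXY : IndepFun X Y μ)
    (hX : Measurable X) (hY : Measurable Y) (hI : ∀ ω, X ω ∈ I) (hJ : ∀ ω, Y ω ∈ J)
    (F : α → β → ℝ) :
    ∫ ω, F (X ω) (Y ω) ∂μ =
      ∑ i ∈ I, ∑ j ∈ J, μ.real (X ⁻¹' {i}) * μ.real (Y ⁻¹' {j}) * F i j := by
  change ∫ ω, Function.uncurry F (X ω, Y ω) ∂μ = _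
  rw [integral_comp_eq_sum_of_forall_mem_finset (hX.prodMk hY)
    (fun ω ↦ Finset.mem_product.2 ⟨hI ω, hJ ω⟩) (Function.uncurry F), Finset.sum_product]
  refine Finset.sum_congr rfl fun i _ ↦ Finset.sum_congr rfl fun j _ ↦ ?_
  rw [← Set.singleton_prod_singleton, Set.mk_preimage_prod, measureReal_def, measureReal_def,
    measureReal_def, hXY.measure_inter_preimage_eq_mul _ _ (measurableSet_singleton i)
      (measurableSet_singleton j), ENNReal.toReal_mul, Function.uncurry_apply_pair]

lemma IndepFun.covariance_comp₂_comp_eq_zero [Countable α] [Countable β] [IsProbabilityMeasure μ]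
    (hXY : IndepFun X Y μ)
    (hX : Measurable X) (hY : Measurable Y) (hI : ∀ ω, X ω ∈ I) (hJ : ∀ ω, Y ω ∈ J)
    {F : α → β → ℝ} {c : ℝ} (hF : ∀ i ∈ I, ∑ j ∈ J, μ.real (Y ⁻¹' {j}) * F i j = c)
    (G : α → ℝ) :
    cov[fun ω ↦ F (X ω) (Y ω), fun ω ↦ G (X ω); μ] = 0 := by
  have hpair : ∀ ω, (X ω, Y ω) ∈ I ×ˢ J := fun ω ↦ Finset.mem_product.2 ⟨hI ω, hJ ω⟩
  have hF2 : MemLp (fun ω ↦ F (X ω) (Y ω)) 2 μ :=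
    memLp_comp_of_forall_mem_finset (hX.prodMk hY) hpair (Function.uncurry F) 2
  rw [covariance_eq_sub hF2 (memLp_comp_of_forall_mem_finset hX hI G 2)]
  have hprod : ∫ ω, F (X ω) (Y ω) * G (X ω) ∂μ = c * ∫ ω, G (X ω) ∂μ := by
    rw [hXY.integral_comp₂_eq_sum_sum hX hY hI hJ (fun i j ↦ F i j * G i),
      integral_comp_eq_sum_of_forall_mem_finset hX hI, Finset.mul_sum]
    refine Finset.sum_congr rfl fun i hi ↦ ?_
    rw [← hF i hi, Finset.sum_mul]
    exact Finset.sum_congr rfl fun j _ ↦ by ring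
  have hmean : ∫ ω, F (X ω) (Y ω) ∂μ = c := by
    rw [hXY.integral_comp₂_eq_sum_sum hX hY hI hJ, ← mul_one c,
      ← sum_measureReal_preimage_singleton (μ := μ) hX hI, Finset.mul_sum]
    refine Finset.sum_congr rfl fun i hi ↦ ?_
    rw [← hF i hi, Finset.sum_mul]
    exact Finset.sum_congr rfl fun j _ ↦ by ring
  change ∫ ω, F (X ω) (Y ω) * G (X ω) ∂μ - (∫ ω, F (X ω) (Y ω) ∂μ) * ∫ ω, G (X ω) ∂μ = 0
  rw [hprod, hmean, sub_self]

end Pair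

section Family

variable {Ω α ι : Type*} [MeasurableSpace Ω] {μ : Measure Ω} [IsProbabilityMeasure μ]
  [MeasurableSpace α] [MeasurableSingletonClass α] [Countable α]
  {X : ι → Ω → α} {I : Finset α} {F : α → α → ℝ} {c : ℝ}

lemma iIndepFun.covariance_comp₂_comp_eq_zero (hind : iIndepFun X μ)
    (hX : ∀ k, Measurable (X k)) (hI : ∀ k ω, X k ω ∈ I) (hF_symm : ∀ i j, F i j = F j i)
    (hF : ∀ k, ∀ i ∈ I, ∑ j ∈ I, μ.real (X k ⁻¹' {j}) * F i j = c) (G : α → ℝ)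
    {k l : ι} (hkl : k ≠ l) (j : ι) :
    cov[fun ω ↦ F (X k ω) (X l ω), fun ω ↦ G (X j ω); μ] = 0 := by
  by_cases hjk : j = k
  · subst hjk
    exact (hind.indepFun hkl).covariance_comp₂_comp_eq_zero (hX j) (hX l) (hI j) (hI l)
      (hF l) G
  by_cases hjl : j = l
  · subst hjl
    rw [show (fun ω ↦ F (X k ω) (X j ω)) = fun ω ↦ F (X j ω) (X k ω) from
      funext fun ω ↦ hF_symm _ _]
    exact (hind.indepFun (Ne.symm hkl)).covariance_comp₂_comp_eq_zero (hX j) (hX k) (hI j)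
      (hI k) (hF k) G
  have hpair : ∀ ω, (X k ω, X l ω) ∈ I ×ˢ I := fun ω ↦ Finset.mem_product.2 ⟨hI k ω, hI l ω⟩
  exact IndepFun.covariance_eq_zero
    ((hind.indepFun_prodMk hX k l j (Ne.symm hjk) (Ne.symm hjl)).comp
      (measurable_of_countable (Function.uncurry F)) (measurable_of_countable G))
    (memLp_comp_of_forall_mem_finset ((hX k).prodMk (hX l)) hpair (Function.uncurry F) 2)
    (memLp_comp_of_forall_mem_finset (hX j) (hI j) G 2)

lemma iIndepFun.covariance_offDiag_sum_comp₂_sum_comp_eq_zero [DecidableEq ι]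
    (hind : iIndepFun X μ) (hX : ∀ k, Measurable (X k)) (hI : ∀ k ω, X k ω ∈ I)
    (hF_symm : ∀ i j, F i j = F j i)
    (hF : ∀ k, ∀ i ∈ I, ∑ j ∈ I, μ.real (X k ⁻¹' {j}) * F i j = c) (G : α → ℝ) (s : Finset ι) :
    cov[fun ω ↦ ∑ k ∈ s, ∑ l ∈ s, (if k ≠ l then F (X k ω) (X l ω) else 0),
      fun ω ↦ ∑ j ∈ s, G (X j ω); μ] = 0 := by
  have hmemU (k l : ι) : MemLp (fun ω ↦ if k ≠ l then F (X k ω) (X l ω) else 0) 2 μ :=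
    memLp_comp_of_forall_mem_finset ((hX k).prodMk (hX l))
      (fun ω ↦ Finset.mem_product.2 ⟨hI k ω, hI l ω⟩) (fun x ↦ if k ≠ l then F x.1 x.2 else 0) 2
  have hmemS (j : ι) : MemLp (fun ω ↦ G (X j ω)) 2 μ :=
    memLp_comp_of_forall_mem_finset (hX j) (hI j) G 2
  rw [covariance_fun_sum_fun_sum' (fun k _ ↦ memLp_finsetSum _ fun l _ ↦ hmemU k l)
    fun j _ ↦ hmemS j]
  refine Finset.sum_eq_zero fun k _ ↦ Finset.sum_eq_zero fun j _ ↦ ?_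
  rw [covariance_fun_sum_left' (fun l _ ↦ hmemU k l) (hmemS j)]
  refine Finset.sum_eq_zero fun l _ ↦ ?_
  by_cases hkl : k = l
  · simp [hkl, covariance_const_left]
  · simpa [hkl] using hind.covariance_comp₂_comp_eq_zero hX hI hF_symm hF G hkl j

end Family

end ProbabilityTheory

theorem ustat_sstat_uncorrelated_general
    {Ω : Type*} [MeasurableSpace Ω] (μ : Measure Ω) [IsProbabilityMeasure μ]
    (m : ℕ → ℕ) (p : ℕ → ℕ → ℝ) (X : ℕ → ℕ → Ω → ℕ)
    (hp_pos : ∀ n : ℕ, ∀ i ∈ Finset.Icc 1 (m n), 0 < p n i)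
    (hX_meas : ∀ n k, Measurable (X n k))
    (hX_range : ∀ n k ω, X n k ω ∈ Finset.Icc 1 (m n))
    (hX_law : ∀ n k, ∀ i ∈ Finset.Icc 1 (m n), μ (X n k ⁻¹' {i}) = ENNReal.ofReal (p n i))
    (hX_indep : ∀ n : ℕ, iIndepFun (X n) μ)
    :
    ∀ n : ℕ, ∫ ω, (Ustat p X n ω - ∫ ω', Ustat p X n ω' ∂μ) *
        (Sstat p X n ω - ∫ ω', Sstat p X n ω' ∂μ) ∂μ = 0 := by
  intro n
  set F : ℕ → ℕ → ℝ := fun i j ↦ (if i = j then 1 else 0) / p n i with hF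
  have hF_symm (i j : ℕ) : F i j = F j i := by
    by_cases h : i = j <;> simp [hF, h, eq_comm]
  have hF_mean (k : ℕ) :
      ∀ i ∈ Finset.Icc 1 (m n), ∑ j ∈ Finset.Icc 1 (m n), μ.real (X n k ⁻¹' {j}) * F i j = 1 :=
    fun i hi ↦ by
      rw [Finset.sum_eq_single_of_mem i hi fun j _ hji ↦ by simp [hF, Ne.symm hji],
        measureReal_def, hX_law n k i hi, ENNReal.toReal_ofReal (hp_pos n i hi).le]
      simp [hF, (hp_pos n i hi).ne']
  exact (hX_indep n).covariance_offDiag_sum_comp₂_sum_comp_eq_zero (hX_meas n) (hX_range n)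
    hF_symm hF_mean (fun i ↦ (p n i)⁻¹) (Finset.Icc 1 n)

theorem ustat_sstat_uncorrelated
    {Ω : Type*} [MeasurableSpace Ω] (μ : Measure Ω) [IsProbabilityMeasure μ]
    (m : ℕ → ℕ) (p : ℕ → ℕ → ℝ) (X : ℕ → ℕ → Ω → ℕ)
    (hp_pos : ∀ n : ℕ, ∀ i ∈ Finset.Icc 1 (m n), 0 < p n i)
    (hp_sum : ∀ n : ℕ, ∑ i ∈ Finset.Icc 1 (m n), p n i = 1)
    (hX_meas : ∀ n k, Measurable (X n k))
    (hX_range : ∀ n k ω, X n k ω ∈ Finset.Icc 1 (m n))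
    (hX_law : ∀ n k, ∀ i ∈ Finset.Icc 1 (m n), μ (X n k ⁻¹' {i}) = ENNReal.ofReal (p n i))
    (hX_indep : ∀ n : ℕ, iIndepFun (X n) μ)
    :
    ∀ n : ℕ, ∫ ω, (Ustat p X n ω - ∫ ω', Ustat p X n ω' ∂μ) *
        (Sstat p X n ω - ∫ ω', Sstat p X n ω' ∂μ) ∂μ = 0 :=
  ustat_sstat_uncorrelated_general μ m p X hp_pos hX_meas hX_range hX_law hX_indep
end

section
/- The variance of the Pearson chi-square statistic satisfies Var(χ²_n) = n^{-1}[Var(p_n^{-1}(X_n)) + 2(n−1)(m_n−1)]. -/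
/-!
Writing `a_i(x) = 1{x = i} - p_i`, the statistic is a V-statistic,
`χ²_n = n⁻¹ ∑_{k,l} h(X_k, X_l)` with kernel
`h(x, y) = ∑_i a_i(x) a_i(y) / p_i = 1{x = y} / p_x - 1`.
The kernel is degenerate, `∑_y p_y h(x, y) = 0`, so integrating out a variable that occurs only
once among `X_k, X_l, X_k', X_l'` kills `E[h(X_k, X_l) h(X_k', X_l')]`; also `h(X_k, X_l)` and
`h(X_k', X_l')` are independent when `{k, l}` and `{k', l'}` are disjoint. Hence the summands are
uncorrelated unless `{k', l'} = {k, l}`, and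
`Var(∑ h) = n Var(h(X, X)) + 2 n (n - 1) E[h(X, Y)²]` with `h(X, X) = 1 / p(X) - 1` and
`E[h(X, Y)²] = m - 1` for independent copies `X, Y`.
-/

open MeasureTheory ProbabilityTheory

section

variable {M : Finset ℕ} {P : ℕ → ℝ}

noncomputable def pearsonKernel (P : ℕ → ℝ) (x y : ℕ) : ℝ := (if x = y then (P x)⁻¹ else 0) - 1

theorem pearsonKernel_comm (P : ℕ → ℝ) (x y : ℕ) : pearsonKernel P x y = pearsonKernel P y x := by
  unfold pearsonKernel
  split_ifs <;> simp_all

theorem pearsonKernel_self (P : ℕ → ℝ) (x : ℕ) : pearsonKernel P x x = (P x)⁻¹ - 1 := by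
  simp [pearsonKernel]

theorem sum_mul_pearsonKernel (hP : ∀ i ∈ M, P i ≠ 0) (hPsum : ∑ i ∈ M, P i = 1)
    {x : ℕ} (hx : x ∈ M) : ∑ y ∈ M, P y * pearsonKernel P x y = 0 := by
  simp only [pearsonKernel, mul_sub, mul_one, mul_ite, mul_zero, Finset.sum_sub_distrib,
    Finset.sum_ite_eq, if_pos hx, hPsum]
  rw [mul_inv_cancel₀ (hP x hx), sub_self]

theorem sum_mul_sum_mul_pearsonKernel_sq (hP : ∀ i ∈ M, P i ≠ 0) (hPsum : ∑ i ∈ M, P i = 1) :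
    ∑ x ∈ M, P x * ∑ y ∈ M, P y * pearsonKernel P x y ^ 2 = M.card - 1 := by
  have hinner : ∀ x ∈ M, P x * ∑ y ∈ M, P y * pearsonKernel P x y ^ 2 = 1 - P x := by
    intro x hx
    have hsq : ∀ y, pearsonKernel P x y ^ 2
        = (if x = y then (P x)⁻¹ ^ 2 - 2 * (P x)⁻¹ else 0) + 1 := by
      intro y; unfold pearsonKernel; split_ifs <;> ring
    simp only [hsq, mul_add, mul_one, mul_ite, mul_zero, Finset.sum_add_distrib,
      Finset.sum_ite_eq, if_pos hx, hPsum]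
    field_simp [hP x hx]
    ring
  rw [Finset.sum_congr rfl hinner, Finset.sum_sub_distrib, hPsum]
  simp

theorem sum_centered_indicator_mul (hP : ∀ i ∈ M, P i ≠ 0) (hPsum : ∑ i ∈ M, P i = 1)
    {x y : ℕ} (hx : x ∈ M) (hy : y ∈ M) :
    ∑ i ∈ M, ((if x = i then 1 else 0) - P i) * ((if y = i then 1 else 0) - P i) / P i
      = pearsonKernel P x y := by
  have hterm : ∀ i ∈ M, ((if x = i then 1 else 0) - P i) * ((if y = i then 1 else 0) - P i) / P i
      = (if x = i then (if y = i then (P i)⁻¹ else 0) - 1 else 0) - (if y = i then 1 else 0)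
        + P i := by
    intro i hi
    have := hP i hi
    split_ifs <;> field_simp <;> ring
  rw [Finset.sum_congr rfl hterm]
  simp only [Finset.sum_add_distrib, Finset.sum_sub_distrib, Finset.sum_ite_eq, if_pos hx,
    if_pos hy, hPsum, pearsonKernel]
  rcases eq_or_ne x y with rfl | h
  · simp
  · simp [h, Ne.symm h]

theorem sum_sq_sum_centered_indicator_div (hP : ∀ i ∈ M, P i ≠ 0) (hPsum : ∑ i ∈ M, P i = 1)
    {F : Finset ℕ} {y : ℕ → ℕ} (hy : ∀ k ∈ F, y k ∈ M) :
    ∑ i ∈ M, (∑ k ∈ F, ((if y k = i then 1 else 0) - P i)) ^ 2 / P i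
      = ∑ q ∈ F ×ˢ F, pearsonKernel P (y q.1) (y q.2) := by
  simp_rw [sq, Finset.sum_mul_sum, Finset.sum_div]
  rw [Finset.sum_comm, Finset.sum_product]
  refine Finset.sum_congr rfl fun k hk ↦ ?_
  rw [Finset.sum_comm]
  exact Finset.sum_congr rfl fun l hl ↦ sum_centered_indicator_mul hP hPsum (hy k hk) (hy l hl)

theorem chiSq_eq_inv_mul_sum_pearsonKernel {Ω : Type*} {m : ℕ → ℕ} {p : ℕ → ℕ → ℝ}
    {X : ℕ → ℕ → Ω → ℕ} {n : ℕ} (hn : n ≠ 0) (hp : ∀ i ∈ Finset.Icc 1 (m n), p n i ≠ 0)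
    (hp_sum : ∑ i ∈ Finset.Icc 1 (m n), p n i = 1) (ω : Ω)
    (hX : ∀ k, X n k ω ∈ Finset.Icc 1 (m n)) :
    chiSq m p X n ω = (n : ℝ)⁻¹ * ∑ q ∈ Finset.Icc 1 n ×ˢ Finset.Icc 1 n,
      pearsonKernel (p n) (X n q.1 ω) (X n q.2 ω) := by
  have hn' : (n : ℝ) ≠ 0 := Nat.cast_ne_zero.2 hn
  have hcentered : ∀ i, empFreq X n i ω - p n i
      = (n : ℝ)⁻¹ * ∑ k ∈ Finset.Icc 1 n, ((if X n k ω = i then 1 else 0) - p n i) := by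
    intro i
    rw [Finset.sum_sub_distrib, Finset.sum_const, Nat.card_Icc, empFreq]
    field_simp
    simp
  rw [← sum_sq_sum_centered_indicator_div hp hp_sum fun k _ ↦ hX k, chiSq, Finset.mul_sum,
    Finset.mul_sum]
  refine Finset.sum_congr rfl fun i _ ↦ ?_
  rw [hcentered]
  field_simp

section

variable {Ω : Type*} [MeasurableSpace Ω] {μ : Measure Ω}

theorem ProbabilityTheory.IndepFun.integral_comp_eq_integral_sum {β : Type*} [MeasurableSpace β]
    {Z : Ω → β} {Y : Ω → ℕ} (hZY : IndepFun Z Y μ) (hZ : Measurable Z) (hY : Measurable Y)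
    (hYM : ∀ ω, Y ω ∈ M) (hlaw : ∀ i ∈ M, μ (Y ⁻¹' {i}) = ENNReal.ofReal (P i))
    (hP : ∀ i ∈ M, 0 ≤ P i) (g : β → ℕ → ℝ) (hg : ∀ x, Measurable fun z ↦ g z x)
    (hgZ : ∀ x ∈ M, Integrable (fun ω ↦ g (Z ω) x) μ) :
    ∫ ω, g (Z ω) (Y ω) ∂μ = ∫ ω, ∑ x ∈ M, P x * g (Z ω) x ∂μ := by
  have hsplit : ∀ ω, g (Z ω) (Y ω) = ∑ x ∈ M, (Y ⁻¹' {x}).indicator (fun ω ↦ g (Z ω) x) ω := by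
    intro ω
    simp only [Set.indicator, Set.mem_preimage, Set.mem_singleton_iff]
    rw [Finset.sum_ite_eq, if_pos (hYM ω)]
  simp_rw [hsplit]
  rw [integral_finsetSum _ fun x hx ↦ (hgZ x hx).indicator (hY (measurableSet_singleton x)),
    integral_finsetSum _ fun x hx ↦ (hgZ x hx).const_mul (P x)]
  refine Finset.sum_congr rfl fun x hx ↦ ?_
  rw [integral_indicator (hY (measurableSet_singleton x)), integral_const_mul,
    ((IndepFun_iff_Indep _ _ _).1 hZY.symm).setIntegral_eq_mul hY.comap_le hZ.aemeasurable
      (MeasurableSpace.measurableSet_comap.2 ⟨_, measurableSet_singleton x, rfl⟩)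
      (hg x).aestronglyMeasurable, measureReal_def, hlaw x hx, ENNReal.toReal_ofReal (hP x hx)]

theorem integral_comp_eq_sum [IsProbabilityMeasure μ] {Y : Ω → ℕ} (hY : Measurable Y)
    (hYM : ∀ ω, Y ω ∈ M) (hlaw : ∀ i ∈ M, μ (Y ⁻¹' {i}) = ENNReal.ofReal (P i))
    (hP : ∀ i ∈ M, 0 ≤ P i) (g : ℕ → ℝ) :
    ∫ ω, g (Y ω) ∂μ = ∑ i ∈ M, P i * g i := by
  simpa using (indepFun_const_left () Y).integral_comp_eq_integral_sum (μ := μ) measurable_const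
    hY hYM hlaw hP (fun _ ↦ g) (fun _ ↦ measurable_const) fun _ _ ↦ integrable_const _

theorem memLp_comp_of_mem_finset [IsFiniteMeasure μ] {β : Type*} [MeasurableSpace β]
    [MeasurableSingletonClass β] [Countable β] {Z : Ω → β} (hZ : Measurable Z) {S : Finset β}
    (hZS : ∀ ω, Z ω ∈ S) (f : β → ℝ) (p : ENNReal) : MemLp (fun ω ↦ f (Z ω)) p μ :=
  MemLp.of_bound ((measurable_of_countable f).comp hZ).aestronglyMeasurable (∑ s ∈ S, ‖f s‖)
    (ae_of_all _ fun ω ↦ Finset.single_le_sum (fun s _ ↦ norm_nonneg (f s)) (hZS ω))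

theorem variance_comp_eq_sum [IsProbabilityMeasure μ] {Y : Ω → ℕ} (hY : Measurable Y)
    (hYM : ∀ ω, Y ω ∈ M) (hlaw : ∀ i ∈ M, μ (Y ⁻¹' {i}) = ENNReal.ofReal (P i))
    (hP : ∀ i ∈ M, 0 ≤ P i) (g : ℕ → ℝ) :
    Var[fun ω ↦ g (Y ω); μ] = ∑ i ∈ M, P i * g i ^ 2 - (∑ i ∈ M, P i * g i) ^ 2 := by
  rw [variance_eq_sub (memLp_comp_of_mem_finset hY hYM g 2)]
  simp only [Pi.pow_apply]
  rw [integral_comp_eq_sum hY hYM hlaw hP (fun i ↦ g i ^ 2), integral_comp_eq_sum hY hYM hlaw hP]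

theorem variance_sum_product_of_covariance_eq_zero [IsFiniteMeasure μ] {ι : Type*}
    [DecidableEq ι] (s : Finset ι) {H : ι × ι → Ω → ℝ} (hH : ∀ q, MemLp (H q) 2 μ)
    (hswap : ∀ q, H q.swap = H q)
    (horth : ∀ q q', q' ≠ q → q' ≠ q.swap → cov[H q, H q'; μ] = 0) :
    Var[fun ω ↦ ∑ q ∈ s ×ˢ s, H q ω; μ]
      = ∑ k ∈ s, Var[H (k, k); μ] + 2 * ∑ q ∈ s.offDiag, Var[H q; μ] := by
  have hsplit := Finset.sum_union (Finset.disjoint_diag_offDiag s)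
    (f := fun q ↦ ∑ q' ∈ s ×ˢ s, cov[H q, H q'; μ])
  rw [Finset.diag_union_offDiag] at hsplit
  rw [variance_fun_sum' fun q _ ↦ hH q, hsplit, Finset.diag, Finset.sum_map, Finset.mul_sum]
  congr 1
  · refine Finset.sum_congr rfl fun k hk ↦ ?_
    change ∑ q' ∈ s ×ˢ s, cov[H (k, k), H q'; μ] = _
    rw [Finset.sum_eq_single_of_mem (k, k) (Finset.mk_mem_product hk hk)
      fun q' _ hq' ↦ horth _ _ hq' hq', covariance_self (hH _).aemeasurable]
  · refine Finset.sum_congr rfl fun q hq ↦ ?_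
    obtain ⟨hq1, hq2, hne⟩ := Finset.mem_offDiag.1 hq
    have hq' : q ≠ q.swap := fun h ↦ hne (congrArg Prod.fst h)
    rw [Finset.sum_eq_add_of_mem q q.swap (Finset.mk_mem_product hq1 hq2)
      (Finset.mk_mem_product hq2 hq1) hq' fun q' _ h ↦ horth _ _ h.1 h.2, hswap,
      covariance_self (hH _).aemeasurable]
    ring

structure IsIIDWithLaw (μ : Measure Ω) (Y : ℕ → Ω → ℕ) (M : Finset ℕ) (P : ℕ → ℝ) : Prop where
  measurable : ∀ k, Measurable (Y k)
  mem : ∀ k ω, Y k ω ∈ M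
  law : ∀ k, ∀ i ∈ M, μ (Y k ⁻¹' {i}) = ENNReal.ofReal (P i)
  indep : iIndepFun Y μ

namespace IsIIDWithLaw

variable {Y : ℕ → Ω → ℕ}

theorem memLp_comp₂ [IsFiniteMeasure μ] (hY : IsIIDWithLaw μ Y M P) (f : ℕ → ℕ → ℝ) (a b : ℕ)
    (p : ENNReal) : MemLp (fun ω ↦ f (Y a ω) (Y b ω)) p μ :=
  memLp_comp_of_mem_finset (Z := fun ω ↦ (Y a ω, Y b ω))
    ((hY.measurable a).prodMk (hY.measurable b))
    (fun ω ↦ Finset.mk_mem_product (hY.mem a ω) (hY.mem b ω)) (fun z ↦ f z.1 z.2) p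

theorem integral_pearsonKernel_eq_zero [IsProbabilityMeasure μ] (hY : IsIIDWithLaw μ Y M P)
    (hP : ∀ i ∈ M, 0 < P i) (hPsum : ∑ i ∈ M, P i = 1) {a d : ℕ} (had : a ≠ d) :
    ∫ ω, pearsonKernel P (Y a ω) (Y d ω) ∂μ = 0 := by
  rw [(hY.indep.indepFun had).integral_comp_eq_integral_sum (hY.measurable a) (hY.measurable d)
    (hY.mem d) (hY.law d) (fun i hi ↦ (hP i hi).le) (pearsonKernel P)
    (fun _ ↦ measurable_of_countable _)
    (fun x _ ↦ (hY.memLp_comp₂ (fun z _ ↦ pearsonKernel P z x) a a 1).integrable le_rfl)]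
  simp [sum_mul_pearsonKernel (fun i hi ↦ (hP i hi).ne') hPsum (hY.mem a _)]

theorem integral_pearsonKernel_mul_eq_zero [IsProbabilityMeasure μ] (hY : IsIIDWithLaw μ Y M P)
    (hP : ∀ i ∈ M, 0 < P i) (hPsum : ∑ i ∈ M, P i = 1) {a b d : ℕ} (had : a ≠ d) (hbd : b ≠ d) :
    ∫ ω, pearsonKernel P (Y a ω) (Y b ω) * pearsonKernel P (Y a ω) (Y d ω) ∂μ = 0 := by
  rw [(hY.indep.indepFun_prodMk hY.measurable a b d had hbd).integral_comp_eq_integral_sum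
    ((hY.measurable a).prodMk (hY.measurable b)) (hY.measurable d) (hY.mem d) (hY.law d)
    (fun i hi ↦ (hP i hi).le) (fun z x ↦ pearsonKernel P z.1 z.2 * pearsonKernel P z.1 x)
    (fun _ ↦ measurable_of_countable _)
    (fun x _ ↦ (hY.memLp_comp₂ (fun z w ↦ pearsonKernel P z w * pearsonKernel P z x) a b 1
      |>.integrable le_rfl))]
  simp_rw [mul_left_comm _ (pearsonKernel P _ _), ← Finset.mul_sum,
    sum_mul_pearsonKernel (fun i hi ↦ (hP i hi).ne') hPsum (hY.mem a _), mul_zero, integral_zero]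

theorem covariance_pearsonKernel_eq_zero_of_ne [IsProbabilityMeasure μ]
    (hY : IsIIDWithLaw μ Y M P) (hP : ∀ i ∈ M, 0 < P i) (hPsum : ∑ i ∈ M, P i = 1)
    {a b d : ℕ} (hbd : b ≠ d) :
    cov[fun ω ↦ pearsonKernel P (Y a ω) (Y b ω), fun ω ↦ pearsonKernel P (Y a ω) (Y d ω); μ]
      = 0 := by
  rw [covariance_eq_sub (hY.memLp_comp₂ _ a b 2) (hY.memLp_comp₂ _ a d 2)]
  simp only [Pi.mul_apply]
  rcases eq_or_ne a d with rfl | had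
  · simp_rw [mul_comm (pearsonKernel P (Y a _) (Y b _))]
    rw [hY.integral_pearsonKernel_mul_eq_zero (b := a) hP hPsum hbd.symm hbd.symm,
      hY.integral_pearsonKernel_eq_zero hP hPsum hbd.symm]
    simp
  · rw [hY.integral_pearsonKernel_mul_eq_zero hP hPsum had hbd,
      hY.integral_pearsonKernel_eq_zero hP hPsum had]
    simp

theorem covariance_pearsonKernel_eq_zero [IsProbabilityMeasure μ]
    (hY : IsIIDWithLaw μ Y M P) (hP : ∀ i ∈ M, 0 < P i) (hPsum : ∑ i ∈ M, P i = 1)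
    {q q' : ℕ × ℕ} (hq : q' ≠ q) (hqs : q' ≠ q.swap) :
    cov[fun ω ↦ pearsonKernel P (Y q.1 ω) (Y q.2 ω),
      fun ω ↦ pearsonKernel P (Y q'.1 ω) (Y q'.2 ω); μ] = 0 := by
  obtain ⟨a, b⟩ := q
  obtain ⟨c, d⟩ := q'
  have hswap : ∀ k l, (fun ω ↦ pearsonKernel P (Y k ω) (Y l ω))
      = fun ω ↦ pearsonKernel P (Y l ω) (Y k ω) :=
    fun k l ↦ funext fun ω ↦ pearsonKernel_comm P _ _
  simp only [ne_eq, Prod.mk.injEq, Prod.swap_prod_mk, not_and] at hq hqs ⊢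
  -- a shared index is moved to the first slot of both pairs by the symmetry of the kernel
  by_cases hac : a = c
  · subst hac
    exact hY.covariance_pearsonKernel_eq_zero_of_ne hP hPsum fun h ↦ hq rfl h.symm
  by_cases had : a = d
  · subst had
    rw [hswap c]
    exact hY.covariance_pearsonKernel_eq_zero_of_ne hP hPsum fun h ↦ hqs h.symm rfl
  by_cases hbc : b = c
  · subst hbc
    rw [hswap a]
    exact hY.covariance_pearsonKernel_eq_zero_of_ne hP hPsum fun h ↦ hqs rfl h.symm
  by_cases hbd : b = d
  · subst hbd
    rw [hswap a, hswap c]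
    exact hY.covariance_pearsonKernel_eq_zero_of_ne hP hPsum fun h ↦ hq h.symm rfl
  have hind := hY.indep.indepFun_prodMk_prodMk hY.measurable a b c d hac had hbc hbd
  exact (hind.comp (measurable_of_countable fun z : ℕ × ℕ ↦ pearsonKernel P z.1 z.2)
    (measurable_of_countable fun z : ℕ × ℕ ↦ pearsonKernel P z.1 z.2)).covariance_eq_zero
    (hY.memLp_comp₂ _ a b 2) (hY.memLp_comp₂ _ c d 2)

theorem variance_pearsonKernel_self [IsProbabilityMeasure μ] (hY : IsIIDWithLaw μ Y M P)
    (hP : ∀ i ∈ M, 0 ≤ P i) (k j : ℕ) :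
    Var[fun ω ↦ pearsonKernel P (Y k ω) (Y k ω); μ] = Var[fun ω ↦ (P (Y j ω))⁻¹; μ] := by
  simp_rw [pearsonKernel_self]
  rw [variance_sub_const (X := fun ω ↦ (P (Y k ω))⁻¹)
      (memLp_comp_of_mem_finset (hY.measurable k) (hY.mem k) (fun i ↦ (P i)⁻¹) 2).1,
    variance_comp_eq_sum (hY.measurable k) (hY.mem k) (hY.law k) hP fun i ↦ (P i)⁻¹,
    variance_comp_eq_sum (hY.measurable j) (hY.mem j) (hY.law j) hP fun i ↦ (P i)⁻¹]

theorem variance_pearsonKernel_of_ne [IsProbabilityMeasure μ] (hY : IsIIDWithLaw μ Y M P)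
    (hP : ∀ i ∈ M, 0 < P i) (hPsum : ∑ i ∈ M, P i = 1) {k l : ℕ} (hkl : k ≠ l) :
    Var[fun ω ↦ pearsonKernel P (Y k ω) (Y l ω); μ] = M.card - 1 := by
  rw [variance_eq_sub (hY.memLp_comp₂ _ k l 2), hY.integral_pearsonKernel_eq_zero hP hPsum hkl]
  simp only [Pi.pow_apply]
  rw [(hY.indep.indepFun hkl).integral_comp_eq_integral_sum (hY.measurable k) (hY.measurable l)
    (hY.mem l) (hY.law l) (fun i hi ↦ (hP i hi).le) (fun z x ↦ pearsonKernel P z x ^ 2)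
    (fun _ ↦ measurable_of_countable _)
    (fun x _ ↦ (hY.memLp_comp₂ (fun z _ ↦ pearsonKernel P z x ^ 2) k k 1).integrable le_rfl),
    integral_comp_eq_sum (hY.measurable k) (hY.mem k) (hY.law k) (fun i hi ↦ (hP i hi).le)
      fun z ↦ ∑ x ∈ M, P x * pearsonKernel P z x ^ 2,
    sum_mul_sum_mul_pearsonKernel_sq (fun i hi ↦ (hP i hi).ne') hPsum]
  ring

end IsIIDWithLaw

end

end

theorem chisq_variance
    {Ω : Type*} [MeasurableSpace Ω] (μ : Measure Ω) [IsProbabilityMeasure μ]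
    (m : ℕ → ℕ) (p : ℕ → ℕ → ℝ) (X : ℕ → ℕ → Ω → ℕ)
    (hp_pos : ∀ n : ℕ, ∀ i ∈ Finset.Icc 1 (m n), 0 < p n i)
    (hp_sum : ∀ n : ℕ, ∑ i ∈ Finset.Icc 1 (m n), p n i = 1)
    (hX_meas : ∀ n k, Measurable (X n k))
    (hX_range : ∀ n k ω, X n k ω ∈ Finset.Icc 1 (m n))
    (hX_law : ∀ n k, ∀ i ∈ Finset.Icc 1 (m n), μ (X n k ⁻¹' {i}) = ENNReal.ofReal (p n i))
    (hX_indep : ∀ n : ℕ, iIndepFun (X n) μ)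
    :
    ∀ n : ℕ, 1 ≤ n →
      ProbabilityTheory.variance (fun ω => chiSq m p X n ω) μ =
        (n : ℝ)⁻¹ * (ProbabilityTheory.variance (fun ω => (p n (X n 1 ω))⁻¹) μ +
          2 * ((n : ℝ) - 1) * ((m n : ℝ) - 1)) := by
  intro n hn
  have hY : IsIIDWithLaw μ (X n) (Finset.Icc 1 (m n)) (p n) :=
    ⟨hX_meas n, hX_range n, hX_law n, hX_indep n⟩
  have hchi : (fun ω ↦ chiSq m p X n ω) = fun ω ↦ (n : ℝ)⁻¹ *
      ∑ q ∈ Finset.Icc 1 n ×ˢ Finset.Icc 1 n, pearsonKernel (p n) (X n q.1 ω) (X n q.2 ω) :=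
    funext fun ω ↦ chiSq_eq_inv_mul_sum_pearsonKernel (by omega)
      (fun i hi ↦ (hp_pos n i hi).ne') (hp_sum n) ω (hX_range n · ω)
  have hvar := variance_sum_product_of_covariance_eq_zero (μ := μ) (Finset.Icc 1 n)
    (H := fun q ω ↦ pearsonKernel (p n) (X n q.1 ω) (X n q.2 ω))
    (fun q ↦ hY.memLp_comp₂ _ q.1 q.2 2)
    (fun q ↦ funext fun ω ↦ pearsonKernel_comm _ _ _)
    (fun _ _ ↦ hY.covariance_pearsonKernel_eq_zero (hp_pos n) (hp_sum n))
  rw [hchi, variance_const_mul, hvar,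
    Finset.sum_congr rfl fun k _ ↦
      hY.variance_pearsonKernel_self (fun i hi ↦ (hp_pos n i hi).le) k 1,
    Finset.sum_congr rfl fun q hq ↦
      hY.variance_pearsonKernel_of_ne (hp_pos n) (hp_sum n) (Finset.mem_offDiag.1 hq).2.2]
  have hoff : ((Finset.Icc 1 n).offDiag.card : ℝ) = n * (n - 1) := by
    rw [Finset.offDiag_card, Nat.card_Icc, Nat.add_sub_cancel, Nat.cast_sub (Nat.le_mul_self n)]
    push_cast
    ring
  simp only [Finset.sum_const, nsmul_eq_mul, hoff, Nat.card_Icc, Nat.add_sub_cancel]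
  field_simp
end

section
/- The sum of third moments satisfies Σ_{k=1}^n E[A³_{n,k}] = m_n^{-3} Σ_{k=1}^n [(k−1) E(p_n^{-2}(X_n)) + 3(k−1)(k−2) m_n + (k−1)(k−2)(k−3)]. -/
open MeasureTheory ProbabilityTheory Filter
open scoped BoundedContinuousFunction

noncomputable def Astat {Ω : Type*} (m : ℕ → ℕ) (p : ℕ → ℕ → ℝ) (X : ℕ → ℕ → Ω → ℕ)
    (n k : ℕ) (ω : Ω) : ℝ :=
  (m n : ℝ)⁻¹ * ∑ j ∈ Finset.Icc 1 (k - 1),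
    (if X n j ω = X n k ω then (1 : ℝ) else 0) / p n (X n j ω)

/-!
Write `A_{n,k} = m⁻¹ p(X_k)⁻¹ N`, where `N` counts the `j < k` with `X_j = X_k`. Splitting
according to the value `i` of `X_k`, `E[A_{n,k}³] = m⁻³ Σᵢ p_i⁻³ E[1{X_k = i} N_i³]` with
`N_i = Σ_{j<k} 1{X_j = i}`. Expanding the cube, `E[1{X_k = i} N_i³]` is a sum over triples
`j₁, j₂, j₃ < k` of `P(X_k = X_{j₁} = X_{j₂} = X_{j₃} = i) = p_i ^ (1 + #{j₁, j₂, j₃})` by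
independence, and counting triples by the number of distinct entries gives
`p_i (t p_i + 3 t (t-1) p_i² + t (t-1) (t-2) p_i³)` with `t = k - 1`. Summing over `i` with
`Σ p_i = 1` and `Σ p_i⁻¹ = E[p(X)⁻²]` gives the formula.
-/

open Finset

namespace Finset

variable {α R : Type*} [DecidableEq α] [CommRing R]

theorem sum_comp_card_insert (g : ℕ → R) {S T : Finset α} (hST : S ⊆ T) :
    ∑ j ∈ T, g #(insert j S) = #S * g #S + (#T - #S) * g (#S + 1) := by
  have hin : ∑ j ∈ S, g #(insert j S) = #S * g #S := by
    rw [sum_congr rfl fun j hj => by rw [insert_eq_of_mem hj], sum_const, nsmul_eq_mul]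
  have hout : ∑ j ∈ T \ S, g #(insert j S) = (#T - #S) * g (#S + 1) := by
    rw [sum_congr rfl fun j hj => by rw [card_insert_of_notMem (mem_sdiff.1 hj).2], sum_const,
      card_sdiff_of_subset hST, nsmul_eq_mul, Nat.cast_sub (card_le_card hST)]
  rw [← sum_sdiff hST, hin, hout, add_comm]

theorem sum_sum_sum_pow_card_insert (T : Finset α) (q : R) :
    ∑ j₁ ∈ T, ∑ j₂ ∈ T, ∑ j₃ ∈ T, q ^ #(insert j₃ (insert j₂ {j₁})) =
      #T * q + 3 * #T * (#T - 1) * q ^ 2 + #T * (#T - 1) * (#T - 2) * q ^ 3 := by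
  have hpair : ∀ j₁ ∈ T, ∀ j₂ ∈ T, insert j₂ {j₁} ⊆ T := fun j₁ h₁ j₂ h₂ =>
    insert_subset h₂ (singleton_subset_iff.2 h₁)
  rw [sum_congr rfl fun j₁ h₁ => sum_congr rfl fun j₂ h₂ =>
      sum_comp_card_insert (q ^ ·) (hpair j₁ h₁ j₂ h₂)]
  rw [sum_congr rfl fun j₁ h₁ => sum_comp_card_insert
    (fun c => (c : R) * q ^ c + (#T - c) * q ^ (c + 1)) (singleton_subset_iff.2 h₁)]
  simp only [card_singleton, sum_const, nsmul_eq_mul]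
  push_cast
  ring

end Finset

section

variable {Ω ι β : Type*}

theorem comp_eq_sum_indicator_preimage_mul {Z : Ω → β} {s : Finset β} (G : β → Ω → ℝ) {ω : Ω}
    (hω : Z ω ∈ s) : G (Z ω) ω = ∑ i ∈ s, (Z ⁻¹' {i}).indicator 1 ω * G i ω := by
  classical
  simp [Set.indicator_apply, hω]

theorem indicator_mul_sum_indicator_pow_three [DecidableEq ι] (E : ι → Set Ω) (k : ι)
    (T : Finset ι) (ω : Ω) :
    (E k).indicator 1 ω * (∑ j ∈ T, (E j).indicator (1 : Ω → ℝ) ω) ^ 3 =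
      ∑ j₁ ∈ T, ∑ j₂ ∈ T, ∑ j₃ ∈ T,
        (⋂ j ∈ insert k (insert j₃ (insert j₂ ({j₁} : Finset ι))), E j).indicator 1 ω := by
  simp only [set_biInter_insert, set_biInter_singleton, Set.inter_indicator_one, Pi.mul_apply,
    pow_three, sum_mul, mul_sum]

variable [MeasurableSpace Ω] {μ : Measure Ω} [IsFiniteMeasure μ]

theorem integrable_indicator_mul_sum_indicator_pow_three {E : ι → Set Ω}
    (hE : ∀ j, MeasurableSet (E j)) (k : ι) (T : Finset ι) :
    Integrable (fun ω => (E k).indicator 1 ω * (∑ j ∈ T, (E j).indicator (1 : Ω → ℝ) ω) ^ 3)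
      μ := by
  classical
  simp_rw [indicator_mul_sum_indicator_pow_three E]
  exact integrable_finsetSum _ fun _ _ => integrable_finsetSum _ fun _ _ =>
    integrable_finsetSum _ fun _ _ =>
      (integrable_const 1).indicator (Finset.measurableSet_biInter _ fun j _ => hE j)

variable [MeasurableSpace β] [MeasurableSingletonClass β]

theorem integral_comp_eq_sum_measureReal {Z : Ω → β} (hZ : Measurable Z) {s : Finset β}
    (hs : ∀ ω, Z ω ∈ s) (f : β → ℝ) :
    ∫ ω, f (Z ω) ∂μ = ∑ i ∈ s, μ.real (Z ⁻¹' {i}) * f i := by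
  have hint : ∀ i, Integrable ((Z ⁻¹' {i}).indicator (1 : Ω → ℝ)) μ := fun i =>
    (integrable_const 1).indicator (hZ (measurableSet_singleton i))
  rw [integral_congr_ae (.of_forall fun ω => comp_eq_sum_indicator_preimage_mul
    (fun i _ => f i) (hs ω)), integral_finsetSum _ fun i _ => (hint i).mul_const _]
  exact sum_congr rfl fun i _ => by
    rw [integral_mul_const, integral_indicator_one (hZ (measurableSet_singleton i))]

end

namespace ProbabilityTheory

variable {Ω ι β : Type*} [MeasurableSpace Ω] {μ : Measure Ω} [MeasurableSpace β]
  [MeasurableSingletonClass β] {Y : ι → Ω → β}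

theorem iIndepFun.measureReal_biInter_preimage_singleton (hY : iIndepFun Y μ) {a : β} {q : ℝ}
    (hq : ∀ j, μ.real (Y j ⁻¹' {a}) = q) (S : Finset ι) :
    μ.real (⋂ j ∈ S, Y j ⁻¹' {a}) = q ^ #S := by
  rw [measureReal_def, hY.measure_inter_preimage_eq_mul S fun _ _ => measurableSet_singleton a,
    ENNReal.toReal_prod, ← prod_const]
  exact prod_congr rfl fun j _ => hq j

theorem iIndepFun.integral_indicator_mul_sum_indicator_pow_three [IsFiniteMeasure μ]
    (hY : iIndepFun Y μ) (hY_meas : ∀ j, Measurable (Y j)) {a : β} {q : ℝ}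
    (hq : ∀ j, μ.real (Y j ⁻¹' {a}) = q) {k : ι} {T : Finset ι} (hk : k ∉ T) :
    ∫ ω, (Y k ⁻¹' {a}).indicator 1 ω * (∑ j ∈ T, (Y j ⁻¹' {a}).indicator (1 : Ω → ℝ) ω) ^ 3 ∂μ =
      q * (#T * q + 3 * #T * (#T - 1) * q ^ 2 + #T * (#T - 1) * (#T - 2) * q ^ 3) := by
  classical
  have hE : ∀ S : Finset ι, MeasurableSet (⋂ j ∈ S, Y j ⁻¹' {a}) := fun S =>
    Finset.measurableSet_biInter _ fun j _ => hY_meas j (measurableSet_singleton a)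
  have hterm : ∀ j₁ ∈ T, ∀ j₂ ∈ T, ∀ j₃ ∈ T,
      ∫ ω, (⋂ j ∈ insert k (insert j₃ (insert j₂ ({j₁} : Finset ι))), Y j ⁻¹' {a}).indicator
        (1 : Ω → ℝ) ω ∂μ = q * q ^ #(insert j₃ (insert j₂ ({j₁} : Finset ι))) :=
    fun j₁ h₁ j₂ h₂ j₃ h₃ => by
      have hk' : k ∉ insert j₃ (insert j₂ ({j₁} : Finset ι)) := by
        simp only [mem_insert, mem_singleton]; grind
      rw [integral_indicator_one (hE _), hY.measureReal_biInter_preimage_singleton hq,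
        card_insert_of_notMem hk', pow_succ']
  have hint : ∀ S : Finset ι, Integrable ((⋂ j ∈ S, Y j ⁻¹' {a}).indicator (1 : Ω → ℝ)) μ :=
    fun S => (integrable_const 1).indicator (hE S)
  calc _ = ∑ j₁ ∈ T, ∑ j₂ ∈ T, ∑ j₃ ∈ T, q * q ^ #(insert j₃ (insert j₂ ({j₁} : Finset ι))) := by
        simp_rw [indicator_mul_sum_indicator_pow_three (fun j => Y j ⁻¹' {a})]
        rw [integral_finsetSum _ fun _ _ => integrable_finsetSum _ fun _ _ =>
          integrable_finsetSum _ fun _ _ => hint _]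
        refine sum_congr rfl fun j₁ h₁ => ?_
        rw [integral_finsetSum _ fun _ _ => integrable_finsetSum _ fun _ _ => hint _]
        refine sum_congr rfl fun j₂ h₂ => ?_
        rw [integral_finsetSum _ fun _ _ => hint _]
        exact sum_congr rfl (hterm j₁ h₁ j₂ h₂)
    _ = _ := by simp only [← mul_sum, sum_sum_sum_pow_card_insert]

end ProbabilityTheory

theorem Astat_eq_mul_sum_indicator {Ω : Type*} (m : ℕ → ℕ) (p : ℕ → ℕ → ℝ) (X : ℕ → ℕ → Ω → ℕ)
    (n k : ℕ) (ω : Ω) :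
    Astat m p X n k ω = (m n : ℝ)⁻¹ * ((p n (X n k ω))⁻¹ *
      ∑ j ∈ Icc 1 (k - 1), (X n j ⁻¹' {X n k ω}).indicator (1 : Ω → ℝ) ω) := by
  unfold Astat
  congr 1
  rw [mul_sum]
  refine sum_congr rfl fun j _ => ?_
  by_cases h : X n j ω = X n k ω <;> simp [h]

theorem integral_Astat_pow_three {Ω : Type*} [MeasurableSpace Ω] {μ : Measure Ω}
    [IsProbabilityMeasure μ] {m : ℕ → ℕ} {p : ℕ → ℕ → ℝ} {X : ℕ → ℕ → Ω → ℕ} {n : ℕ}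
    (hp_pos : ∀ i ∈ Icc 1 (m n), 0 < p n i) (hp_sum : ∑ i ∈ Icc 1 (m n), p n i = 1)
    (hX_meas : ∀ k, Measurable (X n k)) (hX_range : ∀ k ω, X n k ω ∈ Icc 1 (m n))
    (hX_law : ∀ k, ∀ i ∈ Icc 1 (m n), μ.real (X n k ⁻¹' {i}) = p n i)
    (hX_indep : iIndepFun (X n) μ) {k : ℕ} (hk : 1 ≤ k) :
    ∫ ω, Astat m p X n k ω ^ 3 ∂μ = ((m n : ℝ) ^ 3)⁻¹ *
      (((k : ℝ) - 1) * ∑ i ∈ Icc 1 (m n), (p n i)⁻¹ + 3 * ((k : ℝ) - 1) * ((k : ℝ) - 2) * m n +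
        ((k : ℝ) - 1) * ((k : ℝ) - 2) * ((k : ℝ) - 3)) := by
  set T := Icc 1 (k - 1)
  set N : ℕ → Ω → ℝ := fun i ω => ∑ j ∈ T, (X n j ⁻¹' {i}).indicator 1 ω
  have hT : (#T : ℝ) = k - 1 := by
    rw [Nat.card_Icc, Nat.add_sub_cancel, Nat.cast_sub hk, Nat.cast_one]
  have hkT : k ∉ T := by simp only [T, mem_Icc]; omega
  have hpt : ∀ ω, Astat m p X n k ω ^ 3 = ∑ i ∈ Icc 1 (m n),
      ((m n : ℝ)⁻¹ * (p n i)⁻¹) ^ 3 * ((X n k ⁻¹' {i}).indicator 1 ω * N i ω ^ 3) := fun ω => by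
    rw [Astat_eq_mul_sum_indicator]
    exact (comp_eq_sum_indicator_preimage_mul (fun i ω => ((m n : ℝ)⁻¹ * ((p n i)⁻¹ * N i ω)) ^ 3)
      (hX_range k ω)).trans (sum_congr rfl fun i _ => by ring)
  rw [integral_congr_ae (.of_forall hpt), integral_finsetSum _ fun i _ =>
    (integrable_indicator_mul_sum_indicator_pow_three
      (fun j => hX_meas j (measurableSet_singleton i)) k T).const_mul _]
  have hterm : ∀ i ∈ Icc 1 (m n), ∫ ω, ((m n : ℝ)⁻¹ * (p n i)⁻¹) ^ 3 *
      ((X n k ⁻¹' {i}).indicator 1 ω * N i ω ^ 3) ∂μ = ((m n : ℝ) ^ 3)⁻¹ *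
        (((k : ℝ) - 1) * (p n i)⁻¹ + 3 * ((k : ℝ) - 1) * ((k : ℝ) - 2) +
          ((k : ℝ) - 1) * ((k : ℝ) - 2) * ((k : ℝ) - 3) * p n i) := fun i hi => by
    have hpi := (hp_pos i hi).ne'
    rw [integral_const_mul, hX_indep.integral_indicator_mul_sum_indicator_pow_three hX_meas
      (fun j => hX_law j i hi) hkT, hT]
    field_simp
    ring
  rw [sum_congr rfl hterm, ← mul_sum, sum_add_distrib, sum_add_distrib, ← mul_sum, sum_const,
    ← mul_sum, hp_sum, Nat.card_Icc, Nat.add_sub_cancel, nsmul_eq_mul]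
  ring

theorem astat_third_moment_sum
    {Ω : Type*} [MeasurableSpace Ω] (μ : Measure Ω) [IsProbabilityMeasure μ]
    (m : ℕ → ℕ) (p : ℕ → ℕ → ℝ) (X : ℕ → ℕ → Ω → ℕ)
    (hp_pos : ∀ n : ℕ, ∀ i ∈ Finset.Icc 1 (m n), 0 < p n i)
    (hp_sum : ∀ n : ℕ, ∑ i ∈ Finset.Icc 1 (m n), p n i = 1)
    (hX_meas : ∀ n k, Measurable (X n k))
    (hX_range : ∀ n k ω, X n k ω ∈ Finset.Icc 1 (m n))
    (hX_law : ∀ n k, ∀ i ∈ Finset.Icc 1 (m n), μ (X n k ⁻¹' {i}) = ENNReal.ofReal (p n i))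
    (hX_indep : ∀ n : ℕ, iIndepFun (X n) μ)
    :
    ∀ n : ℕ, ∑ k ∈ Finset.Icc 1 n, ∫ ω, (Astat m p X n k ω) ^ 3 ∂μ =
      ((m n : ℝ) ^ 3)⁻¹ * ∑ k ∈ Finset.Icc 1 n,
        (((k : ℝ) - 1) * (∫ ω, ((p n (X n 1 ω))⁻¹) ^ 2 ∂μ) +
          3 * ((k : ℝ) - 1) * ((k : ℝ) - 2) * (m n : ℝ) +
          ((k : ℝ) - 1) * ((k : ℝ) - 2) * ((k : ℝ) - 3)) := by
  intro n
  have hlaw : ∀ k, ∀ i ∈ Icc 1 (m n), μ.real (X n k ⁻¹' {i}) = p n i := fun k i hi => by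
    rw [measureReal_def, hX_law n k i hi, ENNReal.toReal_ofReal (hp_pos n i hi).le]
  have hmoment : ∫ ω, ((p n (X n 1 ω))⁻¹) ^ 2 ∂μ = ∑ i ∈ Icc 1 (m n), (p n i)⁻¹ := by
    rw [integral_comp_eq_sum_measureReal (hX_meas n 1) (hX_range n 1) fun i => ((p n i)⁻¹) ^ 2]
    refine sum_congr rfl fun i hi => ?_
    rw [hlaw 1 i hi]
    field_simp [(hp_pos n i hi).ne']
  rw [hmoment, mul_sum]
  exact sum_congr rfl fun k hk => integral_Astat_pow_three (hp_pos n) (hp_sum n) (hX_meas n)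
    (hX_range n) hlaw (hX_indep n) (mem_Icc.1 hk).1
end

section
/- For each n, E[(Σ_{1≤i<j≤n−1} (n−j)(I(X_{n,i} = X_{n,j})/p_n(X_{n,i}) − 1))²] = (m_n − 1) Σ_{1≤i<j≤n−1} (n−j)². -/
open MeasureTheory ProbabilityTheory

/-! Write `h a b = 𝟙[a = b] / p a - 1`, so the random sum is `∑_{i<j} (n - j) h(X_i, X_j)`.
The kernel `h` is degenerate: averaging either argument against `p` gives `0`. If two pairs
`i < j` and `k < l` differ, some index occurs only once among `i, j, k, l`, and integrating out
that independent coordinate kills `E[h(X_i, X_j) h(X_k, X_l)]`. So the summands are orthogonal,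
each with second moment `∑_{a,b} p a p b h(a, b)^2 = m - 1`. -/

namespace ProbabilityTheory

lemma comp_eq_sum_indicator {Ω α : Type*} {Z : Ω → α} {S : Finset α} (hZS : ∀ ω, Z ω ∈ S)
    (f : α → Ω → ℝ) (ω : Ω) : f (Z ω) ω = ∑ a ∈ S, (Z ⁻¹' {a}).indicator (f a) ω := by
  classical
  simp only [Set.indicator_apply, Set.mem_preimage, Set.mem_singleton_iff]
  rw [Finset.sum_ite_eq S (Z ω), if_pos (hZS ω)]

section DiscreteLaw

variable {Ω α β : Type*} [MeasurableSpace Ω] {μ : Measure Ω}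

lemma integrable_comp_of_forall_mem [IsFiniteMeasure μ] [MeasurableSpace β]
    [DiscreteMeasurableSpace β] {Y : Ω → β} (hY : Measurable Y) {T : Finset β}
    (hYT : ∀ ω, Y ω ∈ T) (g : β → ℝ) : Integrable (fun ω => g (Y ω)) μ :=
  .of_bound (Measurable.of_discrete.comp hY).aestronglyMeasurable (∑ b ∈ T, ‖g b‖)
    (.of_forall fun ω => Finset.single_le_sum (f := fun b => ‖g b‖)
      (fun _ _ => norm_nonneg _) (hYT ω))

variable [MeasurableSpace α] [MeasurableSingletonClass α] {Z : Ω → α} {S : Finset α}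
  {p : α → ℝ}

lemma integral_comp_eq_sum_mul [IsFiniteMeasure μ] (hZ : Measurable Z) (hZS : ∀ ω, Z ω ∈ S)
    (hlaw : ∀ a ∈ S, μ.real (Z ⁻¹' {a}) = p a) (g : α → ℝ) :
    ∫ ω, g (Z ω) ∂μ = ∑ a ∈ S, p a * g a := by
  have hmeas : ∀ a, MeasurableSet (Z ⁻¹' {a}) := fun a => hZ (measurableSet_singleton a)
  simp_rw [comp_eq_sum_indicator hZS (fun a _ => g a)]
  rw [integral_finsetSum _ fun a _ => (integrable_const (g a)).indicator (hmeas a)]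
  refine Finset.sum_congr rfl fun a ha => ?_
  rw [integral_indicator_const _ (hmeas a), hlaw a ha, smul_eq_mul]

lemma IndepFun.integral_comp_eq_integral_sum_mul [IsFiniteMeasure μ] [MeasurableSpace β]
    {Y : Ω → β} (hZY : IndepFun Z Y μ) (hZ : Measurable Z) (hY : Measurable Y)
    (hZS : ∀ ω, Z ω ∈ S) (hlaw : ∀ a ∈ S, μ.real (Z ⁻¹' {a}) = p a) (F : α → β → ℝ)
    (hF_meas : ∀ a, Measurable (F a)) (hF_int : ∀ a ∈ S, Integrable (fun ω => F a (Y ω)) μ) :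
    ∫ ω, F (Z ω) (Y ω) ∂μ = ∫ ω, ∑ a ∈ S, p a * F a (Y ω) ∂μ := by
  classical
  have hmeas : ∀ a, MeasurableSet (Z ⁻¹' {a}) := fun a => hZ (measurableSet_singleton a)
  have hterm : ∀ a ∈ S, ∫ ω, (Z ⁻¹' {a}).indicator (fun ω => F a (Y ω)) ω ∂μ
      = p a * ∫ ω, F a (Y ω) ∂μ := by
    intro a ha
    have hindicator : ∀ ω, (Z ⁻¹' {a}).indicator (fun ω => F a (Y ω)) ω
        = (if Z ω = a then (1 : ℝ) else 0) * F a (Y ω) := by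
      intro ω
      by_cases h : Z ω = a <;> simp [h]
    simp_rw [hindicator]
    rw [hZY.integral_fun_comp_mul_comp hZ.aemeasurable hY.aemeasurable
      (f := fun z => if z = a then (1 : ℝ) else 0)
      (Measurable.ite (measurableSet_singleton a) measurable_const
        measurable_const).aestronglyMeasurable (hF_meas a).aestronglyMeasurable,
      integral_comp_eq_sum_mul hZ hZS hlaw (fun z => if z = a then 1 else 0)]
    simp [ha]
  simp_rw [comp_eq_sum_indicator hZS (fun a ω => F a (Y ω))]
  rw [integral_finsetSum _ fun a ha => (hF_int a ha).indicator (hmeas a),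
    integral_finsetSum _ fun a ha => (hF_int a ha).const_mul (p a)]
  exact Finset.sum_congr rfl fun a ha => by rw [hterm a ha, integral_const_mul]

end DiscreteLaw

section Independence

variable {Ω ι α : Type*} [MeasurableSpace Ω] {μ : Measure Ω} [MeasurableSpace α]

lemma iIndepFun.indepFun_prodMk₃ {X : ι → Ω → α} (hind : iIndepFun X μ)
    (hX : ∀ k, Measurable (X k)) {t a b c : ι} (hta : t ≠ a) (htb : t ≠ b) (htc : t ≠ c) :
    IndepFun (X t) (fun ω => (X a ω, X b ω, X c ω)) μ := by
  classical
  let T : Finset ι := {a, b, c}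
  have ha : a ∈ T := by simp [T]
  have hb : b ∈ T := by simp [T]
  have hc : c ∈ T := by simp [T]
  exact (hind.indepFun_finset {t} T (by simp [T, hta, htb, htc]) hX).comp
    (measurable_pi_apply ⟨t, Finset.mem_singleton_self t⟩)
    (Measurable.prodMk (measurable_pi_apply ⟨a, ha⟩) ((measurable_pi_apply ⟨b, hb⟩).prodMk
      (measurable_pi_apply ⟨c, hc⟩)))

end Independence

section PairKernel

variable {α : Type*} [DecidableEq α] {S : Finset α} {p : α → ℝ}

noncomputable def pairKernel (p : α → ℝ) (a b : α) : ℝ := (if a = b then 1 else 0) / p a - 1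

lemma sum_mul_pairKernel_snd_eq_zero (hp : ∀ a ∈ S, p a ≠ 0) (hsum : ∑ a ∈ S, p a = 1) {a : α}
    (ha : a ∈ S) : ∑ b ∈ S, p b * pairKernel p a b = 0 := by
  have h : ∀ b ∈ S, p b * pairKernel p a b = (if a = b then 1 else 0) - p b := by
    intro b _
    by_cases hab : a = b
    · subst hab; simp [pairKernel, mul_sub, hp a ha]
    · simp [pairKernel, hab]
  rw [Finset.sum_congr rfl h, Finset.sum_sub_distrib, Finset.sum_ite_eq, if_pos ha, hsum,
    sub_self]

lemma sum_mul_pairKernel_fst_eq_zero (hp : ∀ a ∈ S, p a ≠ 0) (hsum : ∑ a ∈ S, p a = 1) {b : α}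
    (hb : b ∈ S) : ∑ a ∈ S, p a * pairKernel p a b = 0 := by
  have h : ∀ a ∈ S, p a * pairKernel p a b = (if a = b then 1 else 0) - p a := by
    intro a ha
    by_cases hab : a = b
    · subst hab; simp [pairKernel, mul_sub, hp a ha]
    · simp [pairKernel, hab]
  rw [Finset.sum_congr rfl h, Finset.sum_sub_distrib, Finset.sum_ite_eq', if_pos hb, hsum,
    sub_self]

lemma sum_mul_pairKernel_sq (hp : ∀ a ∈ S, p a ≠ 0) (hsum : ∑ a ∈ S, p a = 1) {b : α}
    (hb : b ∈ S) : ∑ a ∈ S, p a * pairKernel p a b ^ 2 = pairKernel p b b := by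
  have h : ∀ a ∈ S, p a * pairKernel p a b ^ 2
      = (if a = b then pairKernel p b b else 0) - p a * pairKernel p a b := by
    intro a ha
    by_cases hab : a = b
    · subst hab
      simp only [pairKernel, if_true]
      field_simp [hp a ha]
    · simp [pairKernel, hab]
  rw [Finset.sum_congr rfl h, Finset.sum_sub_distrib, Finset.sum_ite_eq', if_pos hb,
    sum_mul_pairKernel_fst_eq_zero hp hsum hb, sub_zero]

lemma sum_mul_pairKernel_self (hp : ∀ a ∈ S, p a ≠ 0) (hsum : ∑ a ∈ S, p a = 1) :
    ∑ a ∈ S, p a * pairKernel p a a = S.card - 1 := by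
  rw [Finset.sum_congr rfl fun a ha => show p a * pairKernel p a a = 1 - p a by
    simp [pairKernel, mul_sub, hp a ha], Finset.sum_sub_distrib, hsum]
  simp

end PairKernel

section PairKernelMoments

variable {Ω ι α : Type*} [MeasurableSpace Ω] {μ : Measure Ω} [IsFiniteMeasure μ]
  [MeasurableSpace α] [MeasurableSingletonClass α] [Countable α]
  {X : ι → Ω → α} {S : Finset α} {p : α → ℝ}

lemma iIndepFun.integral_eq_zero_of_sum_mul_eq_zero (hind : iIndepFun X μ)
    (hX : ∀ k, Measurable (X k)) (hXS : ∀ k ω, X k ω ∈ S)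
    (hlaw : ∀ k, ∀ a ∈ S, μ.real (X k ⁻¹' {a}) = p a) {t a b c : ι} (hta : t ≠ a)
    (htb : t ≠ b) (htc : t ≠ c) (G : α → α → α → α → ℝ)
    (hG : ∀ x ∈ S, ∀ y ∈ S, ∀ z ∈ S, ∑ s ∈ S, p s * G s x y z = 0) :
    ∫ ω, G (X t ω) (X a ω) (X b ω) (X c ω) ∂μ = 0 := by
  have hY : Measurable fun ω => (X a ω, X b ω, X c ω) := by fun_prop
  have hYS : ∀ ω, (X a ω, X b ω, X c ω) ∈ S ×ˢ S ×ˢ S := fun ω => by simp [hXS]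
  rw [(hind.indepFun_prodMk₃ hX hta htb htc).integral_comp_eq_integral_sum_mul (hX t) hY
    (hXS t) (hlaw t) (fun s y => G s y.1 y.2.1 y.2.2) (fun _ => .of_discrete)
    (fun s _ => integrable_comp_of_forall_mem hY hYS fun y => G s y.1 y.2.1 y.2.2)]
  simp [hG _ (hXS a _) _ (hXS b _) _ (hXS c _)]

variable [DecidableEq α]

lemma integrable_pairKernel_mul_pairKernel (hX : ∀ k, Measurable (X k))
    (hXS : ∀ k ω, X k ω ∈ S) (i j k l : ι) :
    Integrable (fun ω => pairKernel p (X i ω) (X j ω) * pairKernel p (X k ω) (X l ω)) μ :=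
  integrable_comp_of_forall_mem (Y := fun ω => (X i ω, X j ω, X k ω, X l ω)) (by fun_prop)
    (T := S ×ˢ S ×ˢ S ×ˢ S) (fun ω => by simp [hXS])
    fun y => pairKernel p y.1 y.2.1 * pairKernel p y.2.2.1 y.2.2.2

variable (hp : ∀ a ∈ S, p a ≠ 0) (hsum : ∑ a ∈ S, p a = 1)
include hp hsum

lemma iIndepFun.integral_pairKernel_sq (hind : iIndepFun X μ) (hX : ∀ k, Measurable (X k))
    (hXS : ∀ k ω, X k ω ∈ S) (hlaw : ∀ k, ∀ a ∈ S, μ.real (X k ⁻¹' {a}) = p a) {i j : ι}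
    (hij : i ≠ j) : ∫ ω, pairKernel p (X i ω) (X j ω) ^ 2 ∂μ = S.card - 1 := by
  rw [(hind.indepFun hij).integral_comp_eq_integral_sum_mul (hX i) (hX j) (hXS i) (hlaw i)
      (fun a b => pairKernel p a b ^ 2) (fun _ => .of_discrete)
      (fun a _ => integrable_comp_of_forall_mem (hX j) (hXS j) fun b => pairKernel p a b ^ 2),
    integral_comp_eq_sum_mul (hX j) (hXS j) (hlaw j)
      (fun b => ∑ a ∈ S, p a * pairKernel p a b ^ 2),
    ← sum_mul_pairKernel_self hp hsum]
  exact Finset.sum_congr rfl fun b hb => by rw [sum_mul_pairKernel_sq hp hsum hb]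

lemma iIndepFun.integral_pairKernel_mul_pairKernel [LinearOrder ι] (hind : iIndepFun X μ)
    (hX : ∀ k, Measurable (X k)) (hXS : ∀ k ω, X k ω ∈ S)
    (hlaw : ∀ k, ∀ a ∈ S, μ.real (X k ⁻¹' {a}) = p a) {i j k l : ι} (hij : i < j)
    (hkl : k < l) :
    ∫ ω, pairKernel p (X i ω) (X j ω) * pairKernel p (X k ω) (X l ω) ∂μ
      = if i = k ∧ j = l then (S.card : ℝ) - 1 else 0 := by
  by_cases hdiag : i = k ∧ j = l
  · obtain ⟨rfl, rfl⟩ := hdiag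
    rw [if_pos ⟨rfl, rfl⟩, ← hind.integral_pairKernel_sq hp hsum hX hXS hlaw hij.ne]
    simp_rw [sq]
  rw [if_neg hdiag]
  by_cases hi : i ≠ k ∧ i ≠ l
  · exact hind.integral_eq_zero_of_sum_mul_eq_zero hX hXS hlaw hij.ne hi.1 hi.2
      (fun s x y z => pairKernel p s x * pairKernel p y z) fun x hx y _ z _ => by
        simp_rw [← mul_assoc, ← Finset.sum_mul, sum_mul_pairKernel_fst_eq_zero hp hsum hx,
          zero_mul]
  · have hj : j ≠ k ∧ j ≠ l := by grind
    exact hind.integral_eq_zero_of_sum_mul_eq_zero hX hXS hlaw hij.ne' hj.1 hj.2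
      (fun s x y z => pairKernel p x s * pairKernel p y z) fun x hx y _ z _ => by
        simp_rw [← mul_assoc, ← Finset.sum_mul, sum_mul_pairKernel_snd_eq_zero hp hsum hx,
          zero_mul]

end PairKernelMoments

lemma integral_sq_sum_eq_of_orthogonal {Ω ι : Type*} [MeasurableSpace Ω] {μ : Measure Ω}
    [DecidableEq ι] {T : Finset ι} (w : ι → ℝ) (ξ : ι → Ω → ℝ) (c : ℝ)
    (hint : ∀ q ∈ T, ∀ r ∈ T, Integrable (fun ω => ξ q ω * ξ r ω) μ)
    (horth : ∀ q ∈ T, ∀ r ∈ T, ∫ ω, ξ q ω * ξ r ω ∂μ = if q = r then c else 0) :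
    ∫ ω, (∑ q ∈ T, w q * ξ q ω) ^ 2 ∂μ = c * ∑ q ∈ T, w q ^ 2 := by
  have hint' : ∀ q ∈ T, ∀ r ∈ T, Integrable (fun ω => w q * ξ q ω * (w r * ξ r ω)) μ :=
    fun q hq r hr => ((hint q hq r hr).const_mul (w q * w r)).congr (.of_forall fun ω => by ring)
  calc ∫ ω, (∑ q ∈ T, w q * ξ q ω) ^ 2 ∂μ
      = ∑ q ∈ T, ∑ r ∈ T, w q * w r * ∫ ω, ξ q ω * ξ r ω ∂μ := by
        simp_rw [sq, Finset.sum_mul_sum]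
        rw [integral_finsetSum _ fun q hq => integrable_finsetSum _ (hint' q hq)]
        refine Finset.sum_congr rfl fun q hq => ?_
        rw [integral_finsetSum _ (hint' q hq)]
        simp_rw [mul_mul_mul_comm (w q), integral_const_mul]
    _ = c * ∑ q ∈ T, w q ^ 2 := by
        rw [Finset.mul_sum]
        refine Finset.sum_congr rfl fun q hq => ?_
        rw [Finset.sum_congr rfl fun r hr => by rw [horth q hq r hr]]
        simp [hq, sq, mul_comm]

end ProbabilityTheory

theorem weighted_pair_sum_second_moment
    {Ω : Type*} [MeasurableSpace Ω] (μ : Measure Ω) [IsProbabilityMeasure μ]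
    (m : ℕ → ℕ) (p : ℕ → ℕ → ℝ) (X : ℕ → ℕ → Ω → ℕ)
    (hp_pos : ∀ n : ℕ, ∀ i ∈ Finset.Icc 1 (m n), 0 < p n i)
    (hp_sum : ∀ n : ℕ, ∑ i ∈ Finset.Icc 1 (m n), p n i = 1)
    (hX_meas : ∀ n k, Measurable (X n k))
    (hX_range : ∀ n k ω, X n k ω ∈ Finset.Icc 1 (m n))
    (hX_law : ∀ n k, ∀ i ∈ Finset.Icc 1 (m n), μ (X n k ⁻¹' {i}) = ENNReal.ofReal (p n i))
    (hX_indep : ∀ n : ℕ, iIndepFun (X n) μ)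
    :
    ∀ n : ℕ, ∫ ω, (∑ j ∈ Finset.Icc 1 (n - 1), ∑ i ∈ Finset.Icc 1 (j - 1),
        ((n : ℝ) - (j : ℝ)) *
          ((if X n i ω = X n j ω then (1 : ℝ) else 0) / p n (X n i ω) - 1)) ^ 2 ∂μ =
      ((m n : ℝ) - 1) * ∑ j ∈ Finset.Icc 1 (n - 1), ∑ i ∈ Finset.Icc 1 (j - 1),
        ((n : ℝ) - (j : ℝ)) ^ 2 := by
  intro n
  have hp : ∀ a ∈ Finset.Icc 1 (m n), p n a ≠ 0 := fun a ha => (hp_pos n a ha).ne'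
  have hlaw : ∀ k, ∀ a ∈ Finset.Icc 1 (m n), μ.real (X n k ⁻¹' {a}) = p n a := fun k a ha => by
    rw [measureReal_def, hX_law n k a ha, ENNReal.toReal_ofReal (hp_pos n a ha).le]
  have horth : ∀ q ∈ (Finset.Icc 1 (n - 1)).sigma fun j => Finset.Icc 1 (j - 1),
      ∀ r ∈ (Finset.Icc 1 (n - 1)).sigma fun j => Finset.Icc 1 (j - 1),
      ∫ ω, pairKernel (p n) (X n q.2 ω) (X n q.1 ω) * pairKernel (p n) (X n r.2 ω) (X n r.1 ω) ∂μ
        = if q = r then (m n : ℝ) - 1 else 0 := by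
    rintro ⟨j, i⟩ hq ⟨l, k⟩ hr
    simp only [Finset.mem_sigma, Finset.mem_Icc] at hq hr
    dsimp only
    rw [(hX_indep n).integral_pairKernel_mul_pairKernel hp (hp_sum n) (hX_meas n) (hX_range n)
      hlaw (by omega) (by omega), Nat.card_Icc, Nat.add_sub_cancel]
    simp only [Sigma.mk.injEq, heq_eq_eq, and_comm]
  have hkernel : ∀ i j ω, (if X n i ω = X n j ω then (1 : ℝ) else 0) / p n (X n i ω) - 1
      = pairKernel (p n) (X n i ω) (X n j ω) := fun _ _ _ => rfl
  simp_rw [hkernel, Finset.sum_sigma']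
  exact integral_sq_sum_eq_of_orthogonal (fun q : (_ : ℕ) × ℕ => (n : ℝ) - q.1)
    (fun q ω => pairKernel (p n) (X n q.2 ω) (X n q.1 ω)) _
    (fun q _ r _ => integrable_pairKernel_mul_pairKernel (hX_meas n) (hX_range n) _ _ _ _) horth
end
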